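/- arXiv:1807.09850 — 3 statements merged into one kernel-verified Lean document; each statement's English description precedes it below -/
import Mathlib

section
/- Strict convexity of the macroscopic free energy density: Under the perturbed-quadratic assumptions on ψ, the function φ(m) = sup_{σ∈ℝ} { σm − log ∫_ℝ exp(σx − ψ(x)) dx } is smooth, satisfies φ′(0) = 0, and there exist constants 0 < λ ≤ Λ < ∞ such that λ ≤ φ″(m) ≤ Λ for all m ∈ ℝ. -/
open MeasureTheory

noncomputable section

/-- The mean-zero step function on the torus `[0,1)` associated with `x ∈ ℝ^N`:
`x(θ) = x_j` for `θ ∈ [(j-1)/N, j/N)`. -/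
def stepFun (N : ℕ) (x : EuclideanSpace ℝ (Fin N)) (θ : ℝ) : ℝ :=
  if h : 0 < N then x ⟨(⌊(N : ℝ) * θ⌋).toNat % N, Nat.mod_lt _ h⟩ else 0

/-- The second-order difference matrix `A`, `A_{ij} = N²(-δ_{i,j-1} + 2δ_{ij} - δ_{i,j+1})`
with periodic indexing. -/
def Amat (N : ℕ) : Matrix (Fin N) (Fin N) ℝ := fun i j =>
  (N : ℝ) ^ 2 * ((if i = j then (2 : ℝ) else 0) +
    (if (i.val + 1) % N = j.val then (-1 : ℝ) else 0) +
    (if (j.val + 1) % N = i.val then (-1 : ℝ) else 0))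

/-- The quadratic form `x · A y`. -/
def quadA (N : ℕ) (x y : EuclideanSpace ℝ (Fin N)) : ℝ :=
  ∑ i, x i * (Amat N).mulVec (fun j => y j) i

/-- Squared `L²(𝕋)` norm. -/
def L2Sq (f : ℝ → ℝ) : ℝ := ∫ θ in (0:ℝ)..1, f θ ^ 2

/-- `L²(𝕋)` inner product. -/
def L2Inner (f g : ℝ → ℝ) : ℝ := ∫ θ in (0:ℝ)..1, f θ * g θ

/-- Squared homogeneous `H¹(𝕋)` norm. -/
def H1Sq (f : ℝ → ℝ) : ℝ := ∫ θ in (0:ℝ)..1, deriv f θ ^ 2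

/-- Homogeneous `H¹(𝕋)` inner product. -/
def H1Inner (f g : ℝ → ℝ) : ℝ := ∫ θ in (0:ℝ)..1, deriv f θ * deriv g θ

/-- Squared homogeneous `H²(𝕋)` norm. -/
def H2Sq (f : ℝ → ℝ) : ℝ := ∫ θ in (0:ℝ)..1, deriv (deriv f) θ ^ 2

/-- The mean-zero primitive `w` of a mean-zero function on the torus: `w' = f`, `∫ w = 0`. -/
def primitive0 (f : ℝ → ℝ) (θ : ℝ) : ℝ :=
  (∫ t in (0:ℝ)..θ, f t) - ∫ s in (0:ℝ)..1, (∫ t in (0:ℝ)..s, f t)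

/-- Squared homogeneous `H⁻¹(𝕋)` norm of a mean-zero function. -/
def Hneg1Sq (f : ℝ → ℝ) : ℝ := ∫ θ in (0:ℝ)..1, primitive0 f θ ^ 2

/-- Homogeneous `H⁻¹(𝕋)` inner product of mean-zero functions. -/
def Hneg1Inner (f g : ℝ → ℝ) : ℝ := ∫ θ in (0:ℝ)..1, primitive0 f θ * primitive0 g θ

/-- The space `Y_M`: periodic `C¹` splines of degree 2 with mean zero for the mesh `{m/M}`. -/
def IsSpline (M : ℕ) (y : ℝ → ℝ) : Prop :=
  Function.Periodic y 1 ∧ ContDiff ℝ 1 y ∧ (∫ θ in (0:ℝ)..1, y θ) = 0 ∧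
    ∀ m : Fin M, ∃ a b c : ℝ, ∀ θ ∈ Set.Icc ((m : ℝ) / M) (((m : ℝ) + 1) / M),
      y θ = a * θ ^ 2 + b * θ + c

/-- `P` is the `L²(𝕋)`-orthogonal projection onto the spline space `Y_M`. -/
def IsL2Projection (M : ℕ) (P : (ℝ → ℝ) → ℝ → ℝ) : Prop :=
  ∀ f : ℝ → ℝ, IsSpline M (P f) ∧
    ∀ z : ℝ → ℝ, IsSpline M z → (∫ θ in (0:ℝ)..1, (f θ - P f θ) * z θ) = 0

/-- The map `N Pᵗ : Y_M → X_N`, explicitly `(NPᵗ y)_i = N ∫_{(i-1)/N}^{i/N} y dθ`. -/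
def NPt (N : ℕ) (y : ℝ → ℝ) : EuclideanSpace ℝ (Fin N) :=
  WithLp.toLp 2 (fun i => (N : ℝ) * ∫ θ in ((i : ℝ) / N)..(((i : ℝ) + 1) / N), y θ)

/-- The mesoscopic operator `Ā = P A N Pᵗ : Y_M → Y_M`. -/
def Abar (N : ℕ) (P : (ℝ → ℝ) → ℝ → ℝ) (y : ℝ → ℝ) : ℝ → ℝ :=
  P (stepFun N (WithLp.toLp 2 ((Amat N).mulVec (fun j => NPt N y j))))

/-- The Hamiltonian `H(x) = ∑ ψ(x_n)`. -/
def Ham (N : ℕ) (ψ : ℝ → ℝ) (x : EuclideanSpace ℝ (Fin N)) : ℝ := ∑ n, ψ (x n)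

/-- Normalization of a finite measure to a probability measure. -/
def normalizeM {α : Type*} [MeasurableSpace α] (ν : Measure α) : Measure α :=
  (ν Set.univ)⁻¹ • ν

/-- The Gibbs measure `μ` on `X_N`, with density `Z⁻¹ exp(-H)` with respect to the
`(N-1)`-dimensional Hausdorff measure on the hyperplane `{∑ x_i = 0}`. -/
def gibbs (N : ℕ) (ψ : ℝ → ℝ) : Measure (EuclideanSpace ℝ (Fin N)) :=
  normalizeM
    (((μH[(N : ℝ) - 1]).restrict {x : EuclideanSpace ℝ (Fin N) | (∑ i, x i) = 0}).withDensity
      (fun x => ENNReal.ofReal (Real.exp (-Ham N ψ x))))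

/-- The perturbed-quadratic assumptions on the single-site potential `ψ`:
`ψ(z) = z²/2 + a z + δψ(z)` with `δψ ∈ C²`, `‖δψ‖_∞ ≤ Cψ`, `‖(δψ)''‖_∞ ≤ Cψ`. -/
def PsiBase (Cψ : ℝ) (ψ : ℝ → ℝ) : Prop :=
  ∃ a : ℝ, ∃ δψ : ℝ → ℝ, ContDiff ℝ 2 δψ ∧
    (∀ z, ψ z = z ^ 2 / 2 + a * z + δψ z) ∧
    (∀ z, |δψ z| ≤ Cψ) ∧ (∀ z, |deriv (deriv δψ) z| ≤ Cψ)

/-- The normalization `∫ z e^{-ψ(z)} dz / ∫ e^{-ψ(z)} dz = 0`. -/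
def PsiNormalized (ψ : ℝ → ℝ) : Prop := (∫ z : ℝ, z * Real.exp (-ψ z)) = 0

/-- The Euclidean gradient on `ℝ^N`. -/
def grad (N : ℕ) (g : EuclideanSpace ℝ (Fin N) → ℝ) (x : EuclideanSpace ℝ (Fin N)) :
    EuclideanSpace ℝ (Fin N) :=
  WithLp.toLp 2 (fun i => fderiv ℝ g x (EuclideanSpace.single i 1))

/-- The Dirichlet form integrand `∇ξ · A ∇g`. -/
def DirichletA (N : ℕ) (ξ g : EuclideanSpace ℝ (Fin N) → ℝ) (x : EuclideanSpace ℝ (Fin N)) : ℝ :=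
  ∑ i, grad N ξ x i * (Amat N).mulVec (fun j => grad N g x j) i

/-- `f(t)μ` is the law of the Kawasaki dynamics: `f ≥ 0`, `∫ f dμ = 1` and `f` is a weak
solution of the Fokker–Planck equation `∂_t (fμ) = ∇·(A (∇f) μ)`. -/
def IsKawasakiLaw (N : ℕ) (ψ : ℝ → ℝ) (f : ℝ → EuclideanSpace ℝ (Fin N) → ℝ) : Prop :=
  (∀ t x, 0 ≤ f t x) ∧ (∀ t, (∫ x, f t x ∂gibbs N ψ) = 1) ∧
    ∀ ξ : EuclideanSpace ℝ (Fin N) → ℝ, ContDiff ℝ (⊤ : ℕ∞) ξ → ∀ t : ℝ, 0 ≤ t →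
      HasDerivAt (fun s => ∫ x, ξ x * f s x ∂gibbs N ψ)
        (-∫ x, DirichletA N ξ (f t) x ∂gibbs N ψ) t

/-- The macroscopic free energy density
`φ(m) = sup_σ { σm - log ∫ exp(σ z - ψ(z)) dz }`. -/
def phiPot (ψ : ℝ → ℝ) (m : ℝ) : ℝ :=
  ⨆ σ : ℝ, (σ * m - Real.log (∫ z : ℝ, Real.exp (σ * z - ψ z)))

/-- `ζ` is a weak solution of `∂ζ/∂t = ∂²_θ φ'(ζ)` on `[0,T] × 𝕋`, with weak time
derivative `dζ ∈ L²_t(H⁻¹_θ)`; `ζ ∈ L^∞_t(L²_θ)` and `φ'(ζ) ∈ L^∞_t(L²_θ)`. -/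
def IsMacroSolution (ψ : ℝ → ℝ) (T : ℝ) (ζ dζ : ℝ → ℝ → ℝ) : Prop :=
  (∀ t, Function.Periodic (ζ t) 1) ∧
  (∀ t, (∫ θ in (0:ℝ)..1, ζ t θ) = 0) ∧
  (∃ C : ℝ, ∀ t ∈ Set.Icc (0:ℝ) T, L2Sq (ζ t) ≤ C) ∧
  (∃ C : ℝ, ∀ t ∈ Set.Icc (0:ℝ) T, L2Sq (fun θ => deriv (phiPot ψ) (ζ t θ)) ≤ C) ∧
  IntervalIntegrable (fun t => Hneg1Sq (dζ t)) volume 0 T ∧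
  (∀ ξ : ℝ → ℝ, (∫ θ in (0:ℝ)..1, ξ θ) = 0 →
    ∀ᵐ t ∂(volume.restrict (Set.Icc (0:ℝ) T)),
      HasDerivAt (fun s => Hneg1Inner ξ (ζ s)) (Hneg1Inner ξ (dζ t)) t) ∧
  (∀ᵐ t ∂(volume.restrict (Set.Icc (0:ℝ) T)),
    ∀ ξ : ℝ → ℝ, Hneg1Inner ξ (dζ t) = -(∫ θ in (0:ℝ)..1, ξ θ * deriv (phiPot ψ) (ζ t θ)))

/-- The fiber `{x ∈ X_N : Px = y}`. -/
def mesoFiber (N : ℕ) (P : (ℝ → ℝ) → ℝ → ℝ) (y : ℝ → ℝ) : Set (EuclideanSpace ℝ (Fin N)) :=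
  {x | (∑ i, x i) = 0 ∧ P (stepFun N x) = y}

/-- The coarse-grained Hamiltonian
`H̄(y) = -(1/N) log ∫_{{x ∈ X_N : Px = y}} exp(-H) dℒ^{N-M}`. -/
def Hbar (N M : ℕ) (ψ : ℝ → ℝ) (P : (ℝ → ℝ) → ℝ → ℝ) (y : ℝ → ℝ) : ℝ :=
  -(1 / (N : ℝ)) * Real.log
    (∫ x in mesoFiber N P y, Real.exp (-Ham N ψ x) ∂(μH[(N : ℝ) - (M : ℝ)]))

/-- `g ∈ Y_M` is the `L²`-gradient at `y` of the functional `F` on `Y_M`. -/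
def IsMesoGrad (M : ℕ) (F : (ℝ → ℝ) → ℝ) (y g : ℝ → ℝ) : Prop :=
  IsSpline M g ∧ ∀ z : ℝ → ℝ, IsSpline M z →
    HasDerivAt (fun ε : ℝ => F (fun θ => y θ + ε * z θ)) (L2Inner g z) 0

/-- `η` solves the mesoscopic dynamics `dη/dt = -Ā ∇H̄(η)`. -/
def IsMesoSolution (N M : ℕ) (ψ : ℝ → ℝ) (P : (ℝ → ℝ) → ℝ → ℝ) (η : ℝ → ℝ → ℝ) : Prop :=
  ∀ t : ℝ, IsSpline M (η t) ∧ ∃ g : ℝ → ℝ, IsMesoGrad M (Hbar N M ψ P) (η t) g ∧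
    ∀ θ : ℝ, HasDerivAt (fun s => η s θ) (-(Abar N P g θ)) t

/-- The conditional measure `μ(dx | Px = y)`, with density proportional to `exp(-H)` with
respect to the `(N-M)`-dimensional Hausdorff measure on the fiber `{x ∈ X_N : Px = y}`. -/
def condMeasure (N M : ℕ) (ψ : ℝ → ℝ) (P : (ℝ → ℝ) → ℝ → ℝ) (y : ℝ → ℝ) :
    Measure (EuclideanSpace ℝ (Fin N)) :=
  normalizeM (((μH[(N : ℝ) - (M : ℝ)]).restrict (mesoFiber N P y)).withDensity
    (fun x => ENNReal.ofReal (Real.exp (-Ham N ψ x))))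

/-- `f̄(y) = ∫ f(x) μ(dx|y)`. -/
def condAvg (N M : ℕ) (ψ : ℝ → ℝ) (P : (ℝ → ℝ) → ℝ → ℝ) (f : EuclideanSpace ℝ (Fin N) → ℝ)
    (y : ℝ → ℝ) : ℝ := ∫ x, f x ∂condMeasure N M ψ P y

/-- The `i`-th component of `cov_{μ(dx|y)}(f, ∇H)`, i.e. `cov_{μ(dx|y)}(f, ψ'(x_i))`. -/
def covVec (N M : ℕ) (ψ : ℝ → ℝ) (P : (ℝ → ℝ) → ℝ → ℝ) (f : EuclideanSpace ℝ (Fin N) → ℝ)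
    (y : ℝ → ℝ) (i : Fin N) : ℝ :=
  (∫ x, f x * deriv ψ (x i) ∂condMeasure N M ψ P y) -
    (∫ x, f x ∂condMeasure N M ψ P y) * (∫ x, deriv ψ (x i) ∂condMeasure N M ψ P y)

/-- `gp x` is the orthogonal projection of the Euclidean gradient of `f` at `x` onto
the subspace `ker P ∩ X_N`, i.e. the gradient of `f` along `ker P`. -/
def IsParGrad (N : ℕ) (P : (ℝ → ℝ) → ℝ → ℝ) (f : EuclideanSpace ℝ (Fin N) → ℝ)
    (gp : EuclideanSpace ℝ (Fin N) → EuclideanSpace ℝ (Fin N)) : Prop :=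
  ∀ x, ((∑ i, gp x i) = 0 ∧ P (stepFun N (gp x)) = fun _ => 0) ∧
    ∀ v : EuclideanSpace ℝ (Fin N), (∑ i, v i) = 0 → (P (stepFun N v) = fun _ => 0) →
      (∑ i, (grad N f x i - gp x i) * v i) = 0

section SCPhiDev
open Real Filter

namespace SCPhi

def gk (z : ℝ) : ℝ := Real.exp (-z ^ 2 / 2)

/-- Gaussian normalisation. -/
def ZG : ℝ := ∫ z : ℝ, gk z
/-- Gaussian second moment. -/
def SG : ℝ := ∫ z : ℝ, z ^ 2 * gk z

lemma gk_eq (z : ℝ) : gk z = Real.exp (-(1/2) * z ^ 2) := by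
  simp [gk]; ring_nf

lemma gk_pos (z : ℝ) : 0 < gk z := Real.exp_pos _

lemma int_gk : Integrable gk := by
  have h := integrable_exp_neg_mul_sq (by norm_num : (0:ℝ) < 1/2)
  exact h.congr (by filter_upwards with z using (gk_eq z).symm)

/-- Key integrable dominating family. -/
lemma integrable_dom (k : ℕ) (t : ℝ) :
    Integrable (fun z : ℝ => |z| ^ k * Real.exp (t * |z| - z ^ 2 / 2)) := by
  have hint : Integrable (fun z : ℝ =>
      (k.factorial : ℝ) * Real.exp ((|t| + 1) ^ 2) * Real.exp (-(1/4) * z ^ 2)) :=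
    (integrable_exp_neg_mul_sq (by norm_num : (0:ℝ) < 1/4)).const_mul _
  refine hint.mono' ?_ ?_
  · apply Continuous.aestronglyMeasurable
    exact (continuous_abs.pow k).mul
      (((continuous_const.mul continuous_abs).sub
        ((continuous_pow 2).div_const 2)).rexp)
  · filter_upwards with z
    have h1 : |z| ^ k ≤ (k.factorial : ℝ) * Real.exp |z| := by
      have h := Real.pow_div_factorial_le_exp (x := |z|) (abs_nonneg z) k
      rw [div_le_iff₀ (by positivity : (0:ℝ) < (k.factorial : ℝ))] at h
      linarith [h]
    have h2 : Real.exp (t * |z| - z ^ 2 / 2) * Real.exp |z|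
        ≤ Real.exp ((|t| + 1) ^ 2) * Real.exp (-(1/4) * z ^ 2) := by
      rw [← Real.exp_add, ← Real.exp_add]
      apply Real.exp_le_exp.2
      have habs : t * |z| ≤ |t| * |z| :=
        mul_le_mul_of_nonneg_right (le_abs_self t) (abs_nonneg z)
      nlinarith [sq_nonneg (|z| - 2 * (|t| + 1)), abs_nonneg z, abs_nonneg t,
        sq_abs z]
    have hnn : (0:ℝ) ≤ |z| ^ k * Real.exp (t * |z| - z ^ 2 / 2) := by positivity
    rw [Real.norm_of_nonneg hnn]
    calc |z| ^ k * Real.exp (t * |z| - z ^ 2 / 2)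
        ≤ ((k.factorial : ℝ) * Real.exp |z|) * Real.exp (t * |z| - z ^ 2 / 2) :=
          mul_le_mul_of_nonneg_right h1 (Real.exp_pos _).le
      _ = (k.factorial : ℝ) * (Real.exp (t * |z| - z ^ 2 / 2) * Real.exp |z|) := by ring
      _ ≤ (k.factorial : ℝ) * (Real.exp ((|t| + 1) ^ 2) * Real.exp (-(1/4) * z ^ 2)) := by
          apply mul_le_mul_of_nonneg_left h2 (by positivity)
      _ = (k.factorial : ℝ) * Real.exp ((|t| + 1) ^ 2) * Real.exp (-(1/4) * z ^ 2) := by ring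

lemma int_pow_gk (k : ℕ) : Integrable (fun z : ℝ => |z| ^ k * gk z) := by
  have := integrable_dom k 0
  refine this.congr (by filter_upwards with z; simp [gk, sub_eq_add_neg, neg_div])

lemma int_sq_gk : Integrable (fun z : ℝ => z ^ 2 * gk z) := by
  refine (int_pow_gk 2).congr (by filter_upwards with z; rw [sq_abs])

lemma ZG_pos : 0 < ZG := by
  rw [ZG, integral_pos_iff_support_of_nonneg (fun z => (gk_pos z).le) int_gk]
  have hs : Function.support gk = Set.univ := by
    ext z; simp [Function.mem_support, (gk_pos z).ne']
  rw [hs]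
  simp [Real.volume_univ]

lemma SG_pos : 0 < SG := by
  have hnn : 0 ≤ fun z : ℝ => z ^ 2 * gk z :=
    fun z => mul_nonneg (sq_nonneg z) (gk_pos z).le
  rw [SG, integral_pos_iff_support_of_nonneg hnn int_sq_gk]
  have hsub : Set.Ioi (0:ℝ) ⊆ Function.support fun z : ℝ => z ^ 2 * gk z := by
    intro z hz
    simp only [Function.mem_support]
    have hz' : (0:ℝ) < z := hz
    exact ne_of_gt (mul_pos (pow_pos hz' 2) (gk_pos z))
  calc (0:ENNReal) < volume (Set.Ioi (0:ℝ)) := by simp [Real.volume_Ioi]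
    _ ≤ _ := measure_mono hsub

end SCPhi

namespace SCPhi

section Psi

variable {ψ δψ : ℝ → ℝ} {a C : ℝ}

/-- real moment generating integrals -/
def Gmom (ψ : ℝ → ℝ) (k : ℕ) (σ : ℝ) : ℝ := ∫ z : ℝ, z ^ k * Real.exp (σ * z - ψ z)

/-- complex moment generating integrals -/
def GmomC (ψ : ℝ → ℝ) (k : ℕ) (w : ℂ) : ℂ :=
  ∫ z : ℝ, (z : ℂ) ^ k * Complex.exp (w * z - (ψ z : ℂ))

lemma psi_cont (hψ : ∀ z, ψ z = z ^ 2 / 2 + a * z + δψ z) (hδc : Continuous δψ) :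
    Continuous ψ := by
  have : Continuous fun z : ℝ => z ^ 2 / 2 + a * z + δψ z := by fun_prop
  exact this.congr fun z => (hψ z).symm

lemma norm_bound (hψ : ∀ z, ψ z = z ^ 2 / 2 + a * z + δψ z) (hC : ∀ z, |δψ z| ≤ C)
    (k : ℕ) {t s : ℝ} (z : ℝ) (hs : |s| ≤ t) :
    |z| ^ k * Real.exp (s * z - ψ z)
      ≤ Real.exp C * (|z| ^ k * Real.exp ((t + |a|) * |z| - z ^ 2 / 2)) := by
  rw [hψ z]
  have h1 : s * z ≤ t * |z| := by
    calc s * z ≤ |s * z| := le_abs_self _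
      _ = |s| * |z| := abs_mul _ _
      _ ≤ t * |z| := mul_le_mul_of_nonneg_right hs (abs_nonneg z)
  have h2 : -(a * z) ≤ |a| * |z| := by
    calc -(a * z) ≤ |a * z| := neg_le_abs _
      _ = |a| * |z| := abs_mul _ _
  have h3 : -δψ z ≤ C := by
    have := (abs_le.1 (hC z)).1; linarith
  have harg : s * z - (z ^ 2 / 2 + a * z + δψ z) ≤ C + ((t + |a|) * |z| - z ^ 2 / 2) := by
    nlinarith [h1, h2, h3]
  calc |z| ^ k * Real.exp (s * z - (z ^ 2 / 2 + a * z + δψ z))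
      ≤ |z| ^ k * Real.exp (C + ((t + |a|) * |z| - z ^ 2 / 2)) :=
        mul_le_mul_of_nonneg_left (Real.exp_le_exp.2 harg) (by positivity)
    _ = Real.exp C * (|z| ^ k * Real.exp ((t + |a|) * |z| - z ^ 2 / 2)) := by
        rw [Real.exp_add]; ring

lemma integrable_integrand (hψ : ∀ z, ψ z = z ^ 2 / 2 + a * z + δψ z)
    (hδc : Continuous δψ) (hC : ∀ z, |δψ z| ≤ C) (k : ℕ) (σ : ℝ) :
    Integrable (fun z : ℝ => z ^ k * Real.exp (σ * z - ψ z)) := by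
  refine ((integrable_dom k (|σ| + |a|)).const_mul (Real.exp C)).mono' ?_ ?_
  · exact ((continuous_pow k).mul
      (((continuous_const.mul continuous_id).sub (psi_cont hψ hδc)).rexp)).aestronglyMeasurable
  · filter_upwards with z
    rw [Real.norm_eq_abs, abs_mul, abs_pow, abs_of_pos (Real.exp_pos _)]
    exact norm_bound hψ hC k z (le_refl |σ|)

lemma normC_eq (k : ℕ) (w : ℂ) (z : ℝ) :
    ‖(z : ℂ) ^ k * Complex.exp (w * z - (ψ z : ℂ))‖
      = |z| ^ k * Real.exp (w.re * z - ψ z) := by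
  rw [norm_mul, norm_pow, Complex.norm_real, Real.norm_eq_abs, Complex.norm_exp]
  congr 2
  simp [Complex.sub_re, Complex.mul_re]

lemma integrable_integrandC (hψ : ∀ z, ψ z = z ^ 2 / 2 + a * z + δψ z)
    (hδc : Continuous δψ) (hC : ∀ z, |δψ z| ≤ C) (k : ℕ) (w : ℂ) :
    Integrable (fun z : ℝ => (z : ℂ) ^ k * Complex.exp (w * z - (ψ z : ℂ))) := by
  refine ((integrable_dom k (|w.re| + |a|)).const_mul (Real.exp C)).mono' ?_ ?_
  · apply Continuous.aestronglyMeasurable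
    apply Continuous.mul (by fun_prop)
    exact Complex.continuous_exp.comp
      ((continuous_const.mul Complex.continuous_ofReal).sub
        (Complex.continuous_ofReal.comp (psi_cont hψ hδc)))
  · filter_upwards with z
    rw [normC_eq]
    exact norm_bound hψ hC k z (le_refl _)

end Psi

end SCPhi

namespace SCPhi

section Psi2

variable {ψ δψ : ℝ → ℝ} {a C : ℝ}
variable (hψ : ∀ z, ψ z = z ^ 2 / 2 + a * z + δψ z)
  (hδc : Continuous δψ) (hC : ∀ z, |δψ z| ≤ C)

include hψ hδc hC

lemma hasDerivAt_Gmom (k : ℕ) (σ : ℝ) :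
    HasDerivAt (Gmom ψ k) (Gmom ψ (k + 1) σ) σ := by
  have key := hasDerivAt_integral_of_dominated_loc_of_deriv_le
    (F := fun s z => z ^ k * Real.exp (s * z - ψ z))
    (F' := fun s z => z ^ (k + 1) * Real.exp (s * z - ψ z))
    (x₀ := σ)
    (bound := fun z => Real.exp C * (|z| ^ (k + 1) * Real.exp ((|σ| + 1 + |a|) * |z| - z ^ 2 / 2)))
    (s := Metric.ball σ 1) (Metric.ball_mem_nhds σ one_pos)
    (Eventually.of_forall fun s => ((continuous_pow k).mul
      (((continuous_const.mul continuous_id).sub (psi_cont hψ hδc)).rexp)).aestronglyMeasurable)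
    (integrable_integrand hψ hδc hC k σ)
    (((continuous_pow (k + 1)).mul
      (((continuous_const.mul continuous_id).sub (psi_cont hψ hδc)).rexp)).aestronglyMeasurable)
    ?_ (((integrable_dom (k + 1) (|σ| + 1 + |a|)).const_mul (Real.exp C))) ?_
  · exact key.2
  · filter_upwards with z s hs
    rw [Real.norm_eq_abs, abs_mul, abs_pow, abs_of_pos (Real.exp_pos _)]
    refine norm_bound hψ hC (k + 1) z ?_
    have : |s - σ| < 1 := by simpa [Real.dist_eq] using hs
    calc |s| = |σ + (s - σ)| := by ring_nf
      _ ≤ |σ| + |s - σ| := abs_add_le _ _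
      _ ≤ |σ| + 1 := by linarith
  · filter_upwards with z s _
    have h0 : HasDerivAt (fun s : ℝ => s * z - ψ z) z s :=
      (hasDerivAt_mul_const z).sub_const (ψ z)
    have h1 := (h0.exp).const_mul (z ^ k)
    exact h1.congr_deriv (by rw [pow_succ]; ring)

lemma hasDerivAt_GmomC (k : ℕ) (w : ℂ) :
    HasDerivAt (GmomC ψ k) (GmomC ψ (k + 1) w) w := by
  have contC : ∀ s : ℂ, Continuous fun z : ℝ => (z : ℂ) ^ k * Complex.exp (s * z - (ψ z : ℂ)) := by
    intro s
    apply Continuous.mul (by fun_prop)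
    exact Complex.continuous_exp.comp
      ((continuous_const.mul Complex.continuous_ofReal).sub
        (Complex.continuous_ofReal.comp (psi_cont hψ hδc)))
  have contC' : Continuous fun z : ℝ => (z : ℂ) ^ (k + 1) * Complex.exp (w * z - (ψ z : ℂ)) := by
    apply Continuous.mul (by fun_prop)
    exact Complex.continuous_exp.comp
      ((continuous_const.mul Complex.continuous_ofReal).sub
        (Complex.continuous_ofReal.comp (psi_cont hψ hδc)))
  have key := hasDerivAt_integral_of_dominated_loc_of_deriv_le
    (F := fun (s : ℂ) (z : ℝ) => (z : ℂ) ^ k * Complex.exp (s * z - (ψ z : ℂ)))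
    (F' := fun (s : ℂ) (z : ℝ) => (z : ℂ) ^ (k + 1) * Complex.exp (s * z - (ψ z : ℂ)))
    (x₀ := w)
    (bound := fun z =>
      Real.exp C * (|z| ^ (k + 1) * Real.exp ((‖w‖ + 1 + |a|) * |z| - z ^ 2 / 2)))
    (s := Metric.ball w 1) (Metric.ball_mem_nhds w one_pos)
    (Eventually.of_forall fun s => (contC s).aestronglyMeasurable)
    (integrable_integrandC hψ hδc hC k w)
    contC'.aestronglyMeasurable
    ?_ (((integrable_dom (k + 1) (‖w‖ + 1 + |a|)).const_mul (Real.exp C))) ?_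
  · exact key.2
  · filter_upwards with z s hs
    rw [normC_eq]
    refine norm_bound hψ hC (k + 1) z ?_
    have h1 : ‖s - w‖ < 1 := by simpa [dist_eq_norm] using hs
    calc |s.re| ≤ ‖s‖ := Complex.abs_re_le_norm s
      _ = ‖w + (s - w)‖ := by ring_nf
      _ ≤ ‖w‖ + ‖s - w‖ := norm_add_le _ _
      _ ≤ ‖w‖ + 1 := by linarith
  · filter_upwards with z s _
    have h0 : HasDerivAt (fun s : ℂ => s * z - (ψ z : ℂ)) (z : ℂ) s :=
      (hasDerivAt_mul_const (z : ℂ)).sub_const _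
    have h1 := (h0.cexp).const_mul ((z : ℂ) ^ k)
    exact h1.congr_deriv (by rw [pow_succ]; ring)

lemma gmom_eq_re (k : ℕ) (σ : ℝ) : Gmom ψ k σ = (GmomC ψ k (σ : ℂ)).re := by
  have : (fun z : ℝ => (z : ℂ) ^ k * Complex.exp ((σ : ℂ) * z - (ψ z : ℂ)))
      = fun z : ℝ => ((z ^ k * Real.exp (σ * z - ψ z) : ℝ) : ℂ) := by
    funext z
    push_cast [Complex.ofReal_exp]
    ring
  rw [GmomC, this]
  have hcc : (fun z : ℝ => ((z ^ k * Real.exp (σ * z - ψ z) : ℝ) : ℂ))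
      = fun z : ℝ => Complex.ofRealCLM (z ^ k * Real.exp (σ * z - ψ z)) := rfl
  rw [hcc, ContinuousLinearMap.integral_comp_comm _ (integrable_integrand hψ hδc hC k σ)]
  simp [Gmom]

lemma analyticAt_Gmom (k : ℕ) (σ : ℝ) : AnalyticAt ℝ (Gmom ψ k) σ := by
  have hd : Differentiable ℂ (GmomC ψ k) :=
    fun w => (hasDerivAt_GmomC hψ hδc hC k w).differentiableAt
  have h1 : AnalyticAt ℂ (GmomC ψ k) (Complex.ofRealCLM σ) := hd.analyticAt _
  have h2 : AnalyticAt ℝ (fun x : ℝ => (GmomC ψ k (x : ℂ)).re) σ := by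
    have hre : AnalyticAt ℝ (fun v : ℂ => Complex.reCLM v)
        ((GmomC ψ k ∘ Complex.ofRealCLM) σ) :=
      Complex.reCLM.analyticAt _
    have hof : AnalyticAt ℝ (fun x : ℝ => Complex.ofRealCLM x) σ :=
      Complex.ofRealCLM.analyticAt _
    have := hre.comp ((h1.restrictScalars).comp hof)
    simpa [Function.comp_def] using this
  exact h2.congr (Eventually.of_forall fun x => (gmom_eq_re hψ hδc hC k x).symm)

lemma Gmom0_pos (σ : ℝ) : 0 < Gmom ψ 0 σ := by
  have hnn : 0 ≤ fun z : ℝ => z ^ (0:ℕ) * Real.exp (σ * z - ψ z) := by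
    intro z; simp only [pow_zero, one_mul]; positivity
  rw [Gmom, integral_pos_iff_support_of_nonneg hnn (integrable_integrand hψ hδc hC 0 σ)]
  have hs : (Function.support fun z : ℝ => z ^ (0:ℕ) * Real.exp (σ * z - ψ z)) = Set.univ := by
    ext z
    simp [Function.mem_support, (Real.exp_pos (σ * z - ψ z)).ne']
  rw [hs]
  simp [Real.volume_univ]

end Psi2

end SCPhi

namespace SCPhi

lemma gk_even (u : ℝ) : gk (-u) = gk u := by simp [gk]

lemma int_poly_gk (k : ℕ) : Integrable (fun u : ℝ => u ^ k * gk u) := by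
  refine (int_pow_gk k).mono' ?_ ?_
  · exact ((continuous_pow k).mul (by unfold gk; fun_prop : Continuous gk)).aestronglyMeasurable
  · filter_upwards with u
    rw [Real.norm_eq_abs, abs_mul, abs_pow, abs_of_pos (gk_pos u)]

lemma Ig1_zero : (∫ u : ℝ, u * gk u) = 0 := by
  have h1 : (∫ u : ℝ, u * gk u) = ∫ u : ℝ, (-u) * gk (-u) := by
    rw [← integral_neg_eq_self (fun u : ℝ => u * gk u) volume]
  have h2 : (∫ u : ℝ, (-u) * gk (-u)) = -∫ u : ℝ, u * gk u := by
    rw [← integral_neg]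
    congr 1; funext u; rw [gk_even]; ring
  linarith [h1, h2]

lemma int_shift_sq_gk (d : ℝ) : Integrable (fun u : ℝ => (u - d) ^ 2 * gk u) := by
  have h := ((int_poly_gk 2).sub ((int_poly_gk 1).const_mul (2 * d))).add
    ((int_poly_gk 0).const_mul (d ^ 2))
  refine h.congr ?_
  filter_upwards with u
  simp only [Pi.add_apply, Pi.sub_apply]
  ring

lemma Ig2_shift (d : ℝ) : (∫ u : ℝ, (u - d) ^ 2 * gk u) = SG + d ^ 2 * ZG := by
  have e : (fun u : ℝ => (u - d) ^ 2 * gk u)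
      = fun u => (u ^ 2 * gk u - 2 * d * (u ^ 1 * gk u)) + d ^ 2 * (u ^ 0 * gk u) := by
    funext u; ring
  have hsub : Integrable (fun u : ℝ => u ^ 2 * gk u - 2 * d * (u ^ 1 * gk u)) :=
    (int_poly_gk 2).sub ((int_poly_gk 1).const_mul _)
  rw [e, integral_add hsub ((int_poly_gk 0).const_mul _),
    integral_sub (int_poly_gk 2) ((int_poly_gk 1).const_mul _),
    MeasureTheory.integral_const_mul, MeasureTheory.integral_const_mul]
  have e1 : (∫ u : ℝ, u ^ 1 * gk u) = 0 := by
    rw [← Ig1_zero]; congr 1; funext u; rw [pow_one]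
  have e0 : (∫ u : ℝ, u ^ 0 * gk u) = ZG := by
    rw [ZG]; congr 1; funext u; rw [pow_zero, one_mul]
  rw [e1, e0, SG]
  ring

end SCPhi

namespace SCPhi

section Psi3

variable {ψ δψ : ℝ → ℝ} {a C : ℝ}
variable (hψ : ∀ z, ψ z = z ^ 2 / 2 + a * z + δψ z)
  (hδc : Continuous δψ) (hC : ∀ z, |δψ z| ≤ C)

include hψ hδc hC

omit hδc hC in
lemma w_eq (σ z : ℝ) :
    Real.exp (σ * z - ψ z)
      = Real.exp ((σ - a) ^ 2 / 2) * gk (z - (σ - a)) * Real.exp (-δψ z) := by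
  rw [hψ z, gk, ← Real.exp_add, ← Real.exp_add]
  congr 1
  ring

omit hδc in
lemma w_le (σ z : ℝ) :
    Real.exp (σ * z - ψ z)
      ≤ Real.exp C * (Real.exp ((σ - a) ^ 2 / 2) * gk (z - (σ - a))) := by
  rw [w_eq hψ σ z]
  have h1 : Real.exp (-δψ z) ≤ Real.exp C :=
    Real.exp_le_exp.2 (by have := (abs_le.1 (hC z)).1; linarith)
  calc Real.exp ((σ - a) ^ 2 / 2) * gk (z - (σ - a)) * Real.exp (-δψ z)
      ≤ Real.exp ((σ - a) ^ 2 / 2) * gk (z - (σ - a)) * Real.exp C :=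
        mul_le_mul_of_nonneg_left h1 (mul_pos (Real.exp_pos _) (gk_pos _)).le
    _ = Real.exp C * (Real.exp ((σ - a) ^ 2 / 2) * gk (z - (σ - a))) := by ring

omit hδc in
lemma w_ge (σ z : ℝ) :
    Real.exp (-C) * (Real.exp ((σ - a) ^ 2 / 2) * gk (z - (σ - a)))
      ≤ Real.exp (σ * z - ψ z) := by
  rw [w_eq hψ σ z]
  have h1 : Real.exp (-C) ≤ Real.exp (-δψ z) :=
    Real.exp_le_exp.2 (by have := (abs_le.1 (hC z)).2; linarith)
  calc Real.exp (-C) * (Real.exp ((σ - a) ^ 2 / 2) * gk (z - (σ - a)))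
      = Real.exp ((σ - a) ^ 2 / 2) * gk (z - (σ - a)) * Real.exp (-C) := by ring
    _ ≤ Real.exp ((σ - a) ^ 2 / 2) * gk (z - (σ - a)) * Real.exp (-δψ z) :=
        mul_le_mul_of_nonneg_left h1 (mul_pos (Real.exp_pos _) (gk_pos _)).le

lemma int_shift_w (σ c : ℝ) :
    Integrable (fun z : ℝ => (z - c) ^ 2 * Real.exp (σ * z - ψ z)) := by
  have h := ((integrable_integrand hψ hδc hC 2 σ).sub
      ((integrable_integrand hψ hδc hC 1 σ).const_mul (2 * c))).add
    ((integrable_integrand hψ hδc hC 0 σ).const_mul (c ^ 2))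
  refine h.congr ?_
  filter_upwards with z
  simp only [Pi.add_apply, Pi.sub_apply]
  ring

lemma I2c (σ c : ℝ) :
    (∫ z : ℝ, (z - c) ^ 2 * Real.exp (σ * z - ψ z))
      = Gmom ψ 2 σ - 2 * c * Gmom ψ 1 σ + c ^ 2 * Gmom ψ 0 σ := by
  have e : (fun z : ℝ => (z - c) ^ 2 * Real.exp (σ * z - ψ z))
      = fun z => (z ^ 2 * Real.exp (σ * z - ψ z)
          - 2 * c * (z ^ 1 * Real.exp (σ * z - ψ z)))
        + c ^ 2 * (z ^ 0 * Real.exp (σ * z - ψ z)) := by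
    funext z; ring
  have hsub : Integrable (fun z : ℝ => z ^ 2 * Real.exp (σ * z - ψ z)
      - 2 * c * (z ^ 1 * Real.exp (σ * z - ψ z))) :=
    (integrable_integrand hψ hδc hC 2 σ).sub
      ((integrable_integrand hψ hδc hC 1 σ).const_mul _)
  rw [e, integral_add hsub ((integrable_integrand hψ hδc hC 0 σ).const_mul _),
    integral_sub (integrable_integrand hψ hδc hC 2 σ)
      ((integrable_integrand hψ hδc hC 1 σ).const_mul _),
    MeasureTheory.integral_const_mul, MeasureTheory.integral_const_mul]
  rfl

lemma Z_le (σ : ℝ) :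
    Gmom ψ 0 σ ≤ Real.exp C * (Real.exp ((σ - a) ^ 2 / 2) * ZG) := by
  have h0 : Gmom ψ 0 σ = ∫ z : ℝ, Real.exp (σ * z - ψ z) := by
    rw [Gmom]; congr 1; funext z; rw [pow_zero, one_mul]
  have hint2 : Integrable (fun z : ℝ =>
      Real.exp C * (Real.exp ((σ - a) ^ 2 / 2) * gk (z - (σ - a)))) :=
    ((int_gk.comp_sub_right (σ - a)).const_mul _).const_mul _
  have hint1 : Integrable (fun z : ℝ => Real.exp (σ * z - ψ z)) := by
    have := integrable_integrand hψ hδc hC 0 σ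
    refine this.congr ?_
    filter_upwards with z; rw [pow_zero, one_mul]
  rw [h0]
  calc (∫ z : ℝ, Real.exp (σ * z - ψ z))
      ≤ ∫ z : ℝ, Real.exp C * (Real.exp ((σ - a) ^ 2 / 2) * gk (z - (σ - a))) :=
        integral_mono hint1 hint2 (fun z => w_le hψ hC σ z)
    _ = Real.exp C * (Real.exp ((σ - a) ^ 2 / 2) * ∫ z : ℝ, gk (z - (σ - a))) := by
        rw [MeasureTheory.integral_const_mul, MeasureTheory.integral_const_mul]
    _ = Real.exp C * (Real.exp ((σ - a) ^ 2 / 2) * ZG) := by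
        rw [integral_sub_right_eq_self gk (σ - a)]; rfl

lemma Z_ge (σ : ℝ) :
    Real.exp (-C) * (Real.exp ((σ - a) ^ 2 / 2) * ZG) ≤ Gmom ψ 0 σ := by
  have h0 : Gmom ψ 0 σ = ∫ z : ℝ, Real.exp (σ * z - ψ z) := by
    rw [Gmom]; congr 1; funext z; rw [pow_zero, one_mul]
  have hint2 : Integrable (fun z : ℝ =>
      Real.exp (-C) * (Real.exp ((σ - a) ^ 2 / 2) * gk (z - (σ - a)))) :=
    ((int_gk.comp_sub_right (σ - a)).const_mul _).const_mul _
  have hint1 : Integrable (fun z : ℝ => Real.exp (σ * z - ψ z)) := by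
    have := integrable_integrand hψ hδc hC 0 σ
    refine this.congr ?_
    filter_upwards with z; rw [pow_zero, one_mul]
  rw [h0]
  calc Real.exp (-C) * (Real.exp ((σ - a) ^ 2 / 2) * ZG)
      = ∫ z : ℝ, Real.exp (-C) * (Real.exp ((σ - a) ^ 2 / 2) * gk (z - (σ - a))) := by
        rw [MeasureTheory.integral_const_mul, MeasureTheory.integral_const_mul,
          integral_sub_right_eq_self gk (σ - a)]; rfl
    _ ≤ ∫ z : ℝ, Real.exp (σ * z - ψ z) :=
        integral_mono hint2 hint1 (fun z => w_ge hψ hC σ z)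

lemma M2_le (σ : ℝ) :
    (∫ z : ℝ, (z - (σ - a)) ^ 2 * Real.exp (σ * z - ψ z))
      ≤ Real.exp C * (Real.exp ((σ - a) ^ 2 / 2) * SG) := by
  set b := σ - a with hb
  have hint2 : Integrable (fun z : ℝ =>
      Real.exp C * (Real.exp (b ^ 2 / 2) * ((z - b) ^ 2 * gk (z - b)))) := by
    have hbase : Integrable (fun z : ℝ => (z - b) ^ 2 * gk (z - b)) := by
      have := (int_shift_sq_gk 0).comp_sub_right b
      refine this.congr ?_
      filter_upwards with z; simp
    exact (hbase.const_mul _).const_mul _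
  calc (∫ z : ℝ, (z - b) ^ 2 * Real.exp (σ * z - ψ z))
      ≤ ∫ z : ℝ, Real.exp C * (Real.exp (b ^ 2 / 2) * ((z - b) ^ 2 * gk (z - b))) := by
        refine integral_mono (int_shift_w hψ hδc hC σ b) hint2 (fun z => ?_)
        have := mul_le_mul_of_nonneg_left (w_le hψ hC σ z) (sq_nonneg (z - b))
        calc (z - b) ^ 2 * Real.exp (σ * z - ψ z)
            ≤ (z - b) ^ 2 * (Real.exp C * (Real.exp (b ^ 2 / 2) * gk (z - b))) := this
          _ = Real.exp C * (Real.exp (b ^ 2 / 2) * ((z - b) ^ 2 * gk (z - b))) := by ring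
    _ = Real.exp C * (Real.exp (b ^ 2 / 2) * ∫ z : ℝ, (z - b) ^ 2 * gk (z - b)) := by
        rw [MeasureTheory.integral_const_mul, MeasureTheory.integral_const_mul]
    _ = Real.exp C * (Real.exp (b ^ 2 / 2) * SG) := by
        have : (∫ z : ℝ, (z - b) ^ 2 * gk (z - b)) = SG := by
          have h1 : (fun z : ℝ => (z - b) ^ 2 * gk (z - b))
              = fun z : ℝ => (fun u => (u - 0) ^ 2 * gk u) (z - b) := by
            funext z; simp
          rw [h1, integral_sub_right_eq_self (fun u => (u - 0) ^ 2 * gk u) b, Ig2_shift 0]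
          simp
        rw [this]

lemma M2_ge (σ c : ℝ) :
    Real.exp (-C) * (Real.exp ((σ - a) ^ 2 / 2) * SG)
      ≤ ∫ z : ℝ, (z - c) ^ 2 * Real.exp (σ * z - ψ z) := by
  set b := σ - a with hb
  have hbase : Integrable (fun z : ℝ => (z - c) ^ 2 * gk (z - b)) := by
    have := (int_shift_sq_gk (c - b)).comp_sub_right b
    refine this.congr ?_
    filter_upwards with z
    have : z - b - (c - b) = z - c := by ring
    rw [this]
  have hint2 : Integrable (fun z : ℝ =>
      Real.exp (-C) * (Real.exp (b ^ 2 / 2) * ((z - c) ^ 2 * gk (z - b)))) :=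
    (hbase.const_mul _).const_mul _
  have hI : (∫ z : ℝ, (z - c) ^ 2 * gk (z - b)) = SG + (c - b) ^ 2 * ZG := by
    have h1 : (fun z : ℝ => (z - c) ^ 2 * gk (z - b))
        = fun z : ℝ => (fun u => (u - (c - b)) ^ 2 * gk u) (z - b) := by
      funext z
      have : z - b - (c - b) = z - c := by ring
      simp [this]
    rw [h1, integral_sub_right_eq_self (fun u => (u - (c - b)) ^ 2 * gk u) b, Ig2_shift]
  calc Real.exp (-C) * (Real.exp (b ^ 2 / 2) * SG)
      ≤ Real.exp (-C) * (Real.exp (b ^ 2 / 2) * (SG + (c - b) ^ 2 * ZG)) := by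
        have : SG ≤ SG + (c - b) ^ 2 * ZG := by nlinarith [ZG_pos, sq_nonneg (c - b)]
        have h2 := mul_le_mul_of_nonneg_left this (Real.exp_pos (b ^ 2 / 2)).le
        exact mul_le_mul_of_nonneg_left h2 (Real.exp_pos (-C)).le
    _ = ∫ z : ℝ, Real.exp (-C) * (Real.exp (b ^ 2 / 2) * ((z - c) ^ 2 * gk (z - b))) := by
        rw [MeasureTheory.integral_const_mul, MeasureTheory.integral_const_mul, hI]
    _ ≤ ∫ z : ℝ, (z - c) ^ 2 * Real.exp (σ * z - ψ z) := by
        refine integral_mono hint2 (int_shift_w hψ hδc hC σ c) (fun z => ?_)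
        have := mul_le_mul_of_nonneg_left (w_ge hψ hC σ z) (sq_nonneg (z - c))
        calc Real.exp (-C) * (Real.exp (b ^ 2 / 2) * ((z - c) ^ 2 * gk (z - b)))
            = (z - c) ^ 2 * (Real.exp (-C) * (Real.exp (b ^ 2 / 2) * gk (z - b))) := by ring
          _ ≤ (z - c) ^ 2 * Real.exp (σ * z - ψ z) := this

end Psi3

end SCPhi

namespace SCPhi

section Psi4

variable {ψ δψ : ℝ → ℝ} {a C : ℝ}
variable (hψ : ∀ z, ψ z = z ^ 2 / 2 + a * z + δψ z)
  (hδc : Continuous δψ) (hC : ∀ z, |δψ z| ≤ C)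

include hψ hδc hC

lemma Vnum_le (σ : ℝ) :
    (Gmom ψ 2 σ * Gmom ψ 0 σ - (Gmom ψ 1 σ) ^ 2) * ZG
      ≤ Real.exp (2 * C) * SG * (Gmom ψ 0 σ) ^ 2 := by
  set b := σ - a with hb
  set K := Real.exp (b ^ 2 / 2) with hK
  set G0 := Gmom ψ 0 σ
  set G1 := Gmom ψ 1 σ
  set G2 := Gmom ψ 2 σ
  have hG0 : 0 < G0 := Gmom0_pos hψ hδc hC σ
  have h1 : G2 - 2 * b * G1 + b ^ 2 * G0 ≤ Real.exp C * (K * SG) := by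
    have := M2_le hψ hδc hC σ
    rw [I2c hψ hδc hC σ b] at this
    exact this
  have h2 : Real.exp (-C) * (K * ZG) ≤ G0 := Z_ge hψ hδc hC σ
  have stepA : G2 * G0 - G1 ^ 2 ≤ (G2 - 2 * b * G1 + b ^ 2 * G0) * G0 := by
    nlinarith [sq_nonneg (G1 - b * G0)]
  have stepB : G2 * G0 - G1 ^ 2 ≤ Real.exp C * (K * SG) * G0 :=
    stepA.trans (mul_le_mul_of_nonneg_right h1 hG0.le)
  have stepC : (G2 * G0 - G1 ^ 2) * ZG ≤ Real.exp C * (K * SG) * G0 * ZG :=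
    mul_le_mul_of_nonneg_right stepB ZG_pos.le
  refine stepC.trans ?_
  have hexp : Real.exp C = Real.exp (2 * C) * Real.exp (-C) := by
    rw [← Real.exp_add]; ring_nf
  calc Real.exp C * (K * SG) * G0 * ZG
      = Real.exp (2 * C) * SG * G0 * (Real.exp (-C) * (K * ZG)) := by rw [hexp]; ring
    _ ≤ Real.exp (2 * C) * SG * G0 * G0 := by
        refine mul_le_mul_of_nonneg_left h2 ?_
        have := SG_pos
        positivity
    _ = Real.exp (2 * C) * SG * G0 ^ 2 := by ring

lemma Vnum_ge (σ : ℝ) :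
    Real.exp (-(2 * C)) * SG * (Gmom ψ 0 σ) ^ 2
      ≤ (Gmom ψ 2 σ * Gmom ψ 0 σ - (Gmom ψ 1 σ) ^ 2) * ZG := by
  set b := σ - a with hb
  set K := Real.exp (b ^ 2 / 2) with hK
  set G0 := Gmom ψ 0 σ
  set G1 := Gmom ψ 1 σ
  set G2 := Gmom ψ 2 σ
  have hG0 : 0 < G0 := Gmom0_pos hψ hδc hC σ
  have h1 : Real.exp (-C) * (K * SG) ≤ G2 - 2 * (G1 / G0) * G1 + (G1 / G0) ^ 2 * G0 := by
    have := M2_ge hψ hδc hC σ (G1 / G0)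
    rw [I2c hψ hδc hC σ (G1 / G0)] at this
    exact this
  have hplug : G2 - 2 * (G1 / G0) * G1 + (G1 / G0) ^ 2 * G0
      = (G2 * G0 - G1 ^ 2) / G0 := by
    field_simp
    ring
  rw [hplug] at h1
  have h1' : Real.exp (-C) * (K * SG) * G0 ≤ G2 * G0 - G1 ^ 2 :=
    (le_div_iff₀ hG0).1 h1
  have h2 : G0 ≤ Real.exp C * (K * ZG) := Z_le hψ hδc hC σ
  have hexp : Real.exp (-C) = Real.exp (-(2 * C)) * Real.exp C := by
    rw [← Real.exp_add]; ring_nf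
  calc Real.exp (-(2 * C)) * SG * G0 ^ 2
      = Real.exp (-(2 * C)) * SG * G0 * G0 := by ring
    _ ≤ Real.exp (-(2 * C)) * SG * G0 * (Real.exp C * (K * ZG)) := by
        refine mul_le_mul_of_nonneg_left h2 ?_
        have := SG_pos
        positivity
    _ = Real.exp (-C) * (K * SG) * G0 * ZG := by rw [hexp]; ring
    _ ≤ (G2 * G0 - G1 ^ 2) * ZG :=
        mul_le_mul_of_nonneg_right h1' ZG_pos.le

end Psi4

end SCPhi

namespace SCPhi

/-- the derivative of the log-Laplace transform -/
def L1f (ψ : ℝ → ℝ) : ℝ → ℝ := fun σ => Gmom ψ 1 σ / Gmom ψ 0 σ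

/-- log-Laplace transform -/
def LamF (ψ : ℝ → ℝ) : ℝ → ℝ := fun σ => Real.log (Gmom ψ 0 σ)

/-- the variance of the tilted measure -/
def Vf (ψ : ℝ → ℝ) : ℝ → ℝ := fun σ =>
  (Gmom ψ 2 σ * Gmom ψ 0 σ - (Gmom ψ 1 σ) ^ 2) / (Gmom ψ 0 σ) ^ 2

/-- the inverse of `L1f` -/
def sinv (ψ : ℝ → ℝ) : ℝ → ℝ := Function.invFun (L1f ψ)

section Psi5

variable {ψ δψ : ℝ → ℝ} {a C : ℝ}
variable (hψ : ∀ z, ψ z = z ^ 2 / 2 + a * z + δψ z)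
  (hδc : Continuous δψ) (hC : ∀ z, |δψ z| ≤ C)

include hψ hδc hC

lemma hasDerivAt_LamF (σ : ℝ) : HasDerivAt (LamF ψ) (L1f ψ σ) σ :=
  (hasDerivAt_Gmom hψ hδc hC 0 σ).log (Gmom0_pos hψ hδc hC σ).ne'

lemma hasDerivAt_L1f (σ : ℝ) : HasDerivAt (L1f ψ) (Vf ψ σ) σ := by
  have h := (hasDerivAt_Gmom hψ hδc hC 1 σ).div (hasDerivAt_Gmom hψ hδc hC 0 σ)
    (Gmom0_pos hψ hδc hC σ).ne'
  exact h.congr_deriv (by rw [Vf]; ring)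

lemma Vf_ge (σ : ℝ) : Real.exp (-(2 * C)) * (SG / ZG) ≤ Vf ψ σ := by
  have hG0 : 0 < Gmom ψ 0 σ := Gmom0_pos hψ hδc hC σ
  rw [Vf, le_div_iff₀ (pow_pos hG0 2)]
  have h := Vnum_ge hψ hδc hC σ
  rw [show Real.exp (-(2 * C)) * (SG / ZG) * Gmom ψ 0 σ ^ 2
      = (Real.exp (-(2 * C)) * SG * Gmom ψ 0 σ ^ 2) / ZG by field_simp]
  rw [div_le_iff₀ ZG_pos]
  linarith [h]

lemma Vf_le (σ : ℝ) : Vf ψ σ ≤ Real.exp (2 * C) * (SG / ZG) := by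
  have hG0 : 0 < Gmom ψ 0 σ := Gmom0_pos hψ hδc hC σ
  rw [Vf, div_le_iff₀ (pow_pos hG0 2)]
  have h := Vnum_le hψ hδc hC σ
  rw [show Real.exp (2 * C) * (SG / ZG) * Gmom ψ 0 σ ^ 2
      = (Real.exp (2 * C) * SG * Gmom ψ 0 σ ^ 2) / ZG by field_simp]
  rw [le_div_iff₀ ZG_pos]
  linarith [h]

omit hψ hδc hC in
lemma lam0_pos : 0 < Real.exp (-(2 * C)) * (SG / ZG) := by
  have h1 := SG_pos; have h2 := ZG_pos
  positivity

lemma Vf_pos (σ : ℝ) : 0 < Vf ψ σ :=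
  lt_of_lt_of_le (lam0_pos (C := C)) (Vf_ge hψ hδc hC σ)

lemma strictMono_L1f : StrictMono (L1f ψ) := by
  apply strictMono_of_deriv_pos
  intro σ
  rw [(hasDerivAt_L1f hψ hδc hC σ).deriv]
  exact Vf_pos hψ hδc hC σ

lemma analyticAt_L1f (σ : ℝ) : AnalyticAt ℝ (L1f ψ) σ :=
  (analyticAt_Gmom hψ hδc hC 1 σ).div (analyticAt_Gmom hψ hδc hC 0 σ)
    (Gmom0_pos hψ hδc hC σ).ne'

lemma surjective_L1f : Function.Surjective (L1f ψ) := by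
  set lam0 := Real.exp (-(2 * C)) * (SG / ZG) with hlam0
  have hlam0p : 0 < lam0 := lam0_pos (C := C)
  have haux : ∀ σ : ℝ, HasDerivAt (fun s => L1f ψ s - lam0 * s) (Vf ψ σ - lam0) σ := by
    intro σ
    have h2 : HasDerivAt (fun s : ℝ => lam0 * s) lam0 σ := by
      simpa using (hasDerivAt_id σ).const_mul lam0
    exact (hasDerivAt_L1f hψ hδc hC σ).sub h2
  have hmono : Monotone (fun s => L1f ψ s - lam0 * s) := by
    apply monotone_of_deriv_nonneg (fun σ => (haux σ).differentiableAt)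
    intro σ
    rw [(haux σ).deriv]
    linarith [Vf_ge hψ hδc hC σ]
  have hcont : Continuous (L1f ψ) :=
    Differentiable.continuous fun σ => (hasDerivAt_L1f hψ hδc hC σ).differentiableAt
  apply hcont.surjective
  · apply tendsto_atTop_mono' atTop (show ∀ᶠ s in atTop,
        L1f ψ 0 + lam0 * s ≤ L1f ψ s by
      filter_upwards [eventually_ge_atTop (0:ℝ)] with s hs
      have := hmono hs
      simp only at this
      linarith [this])
    exact tendsto_atTop_add_const_left _ _ (tendsto_id.const_mul_atTop hlam0p)
  · apply tendsto_atBot_mono' atBot (show ∀ᶠ s in atBot,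
        L1f ψ s ≤ L1f ψ 0 + lam0 * s by
      filter_upwards [eventually_le_atBot (0:ℝ)] with s hs
      have := hmono hs
      simp only at this
      linarith [this])
    exact tendsto_atBot_add_const_left _ _ (tendsto_id.const_mul_atBot hlam0p)

lemma L1f_sinv (m : ℝ) : L1f ψ (sinv ψ m) = m :=
  Function.rightInverse_invFun (surjective_L1f hψ hδc hC) m

lemma sinv_L1f (σ : ℝ) : sinv ψ (L1f ψ σ) = σ :=
  Function.leftInverse_invFun (strictMono_L1f hψ hδc hC).injective σ

lemma contDiffAt_sinv (m : ℝ) : ContDiffAt ℝ (⊤ : ℕ∞) (sinv ψ) m := by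
  set s := sinv ψ m with hs
  have hfa : ContDiffAt ℝ (⊤ : ℕ∞) (L1f ψ) s := (analyticAt_L1f hψ hδc hC s).contDiffAt
  have hf' : HasFDerivAt (L1f ψ)
      (ContinuousLinearEquiv.unitsEquivAut ℝ
        (Units.mk0 (Vf ψ s) (Vf_pos hψ hδc hC s).ne') : ℝ →L[ℝ] ℝ) s :=
    (hasDerivAt_L1f hψ hδc hC s).hasFDerivAt_equiv (Vf_pos hψ hδc hC s).ne'
  have hloc := hfa.to_localInverse (f' := ContinuousLinearEquiv.unitsEquivAut ℝ
      (Units.mk0 (Vf ψ s) (Vf_pos hψ hδc hC s).ne')) hf' (by simp)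
  rw [L1f_sinv hψ hδc hC m] at hloc
  refine hloc.congr_of_eventuallyEq ?_
  have huniq := (hfa.hasStrictFDerivAt' hf' (by simp)).localInverse_unique
    (Eventually.of_forall (fun σ => sinv_L1f hψ hδc hC σ))
  rw [L1f_sinv hψ hδc hC m] at huniq
  exact huniq

lemma hasDerivAt_sinv (m : ℝ) :
    HasDerivAt (sinv ψ) (1 / Vf ψ (sinv ψ m)) m := by
  set s := sinv ψ m with hs
  have hdiff : DifferentiableAt ℝ (sinv ψ) m :=
    (contDiffAt_sinv hψ hδc hC m).differentiableAt (by simp)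
  have hd := hdiff.hasDerivAt
  have hcomp : HasDerivAt (fun y => L1f ψ (sinv ψ y)) (Vf ψ s * deriv (sinv ψ) m) m :=
    (hasDerivAt_L1f hψ hδc hC s).comp (h₂ := L1f ψ) m hd
  have hid : HasDerivAt (fun y => L1f ψ (sinv ψ y)) 1 m := by
    have he : (fun y => L1f ψ (sinv ψ y)) = fun y => y :=
      funext (fun y => L1f_sinv hψ hδc hC y)
    rw [he]
    exact hasDerivAt_id m
  have huniq : Vf ψ s * deriv (sinv ψ) m = 1 := hcomp.unique hid
  have hVpos := Vf_pos hψ hδc hC s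
  have : deriv (sinv ψ) m = 1 / Vf ψ s := by
    field_simp
    linarith [huniq]
  rw [← this]
  exact hd

end Psi5

end SCPhi

namespace SCPhi

lemma analyticAt_rlog {x : ℝ} (hx : 0 < x) : AnalyticAt ℝ Real.log x := by
  have h1 : AnalyticAt ℂ Complex.log (Complex.ofRealCLM x) :=
    analyticAt_clog (by rw [Complex.mem_slitPlane_iff]; left; simpa using hx)
  have hre : AnalyticAt ℝ (fun v : ℂ => Complex.reCLM v)
      ((Complex.log ∘ Complex.ofRealCLM) x) := Complex.reCLM.analyticAt _
  have hof : AnalyticAt ℝ (fun y : ℝ => Complex.ofRealCLM y) x :=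
    Complex.ofRealCLM.analyticAt _
  have h2 := hre.comp ((h1.restrictScalars).comp hof)
  have h3 : AnalyticAt ℝ (fun y : ℝ => (Complex.log (y : ℂ)).re) x := by
    simpa [Function.comp_def] using h2
  exact h3.congr (Eventually.of_forall fun y => Complex.log_ofReal_re y)

section Psi6

variable {ψ δψ : ℝ → ℝ} {a C : ℝ}
variable (hψ : ∀ z, ψ z = z ^ 2 / 2 + a * z + δψ z)
  (hδc : Continuous δψ) (hC : ∀ z, |δψ z| ≤ C)

include hψ hδc hC

lemma phi_max (m τ : ℝ) :
    τ * m - LamF ψ τ ≤ sinv ψ m * m - LamF ψ (sinv ψ m) := by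
  set s := sinv ψ m with hs
  have hLs : L1f ψ s = m := L1f_sinv hψ hδc hC m
  have haux : ∀ t : ℝ, HasDerivAt (fun t => t * m - LamF ψ t) (m - L1f ψ t) t := by
    intro t
    exact (hasDerivAt_mul_const m).sub (hasDerivAt_LamF hψ hδc hC t)
  have hdiff : Differentiable ℝ (fun t => t * m - LamF ψ t) :=
    fun t => (haux t).differentiableAt
  rcases le_total τ s with hts | hst
  · have hmono : MonotoneOn (fun t => t * m - LamF ψ t) (Set.Iic s) := by
      apply monotoneOn_of_deriv_nonneg (convex_Iic s) hdiff.continuous.continuousOn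
        (hdiff.differentiableOn)
      intro t ht
      rw [interior_Iic] at ht
      rw [(haux t).deriv]
      have : L1f ψ t ≤ L1f ψ s :=
        (strictMono_L1f hψ hδc hC).monotone (le_of_lt ht)
      linarith [hLs ▸ this]
    exact hmono (Set.mem_Iic.2 hts) (Set.mem_Iic.2 (le_refl s)) hts
  · have hanti : AntitoneOn (fun t => t * m - LamF ψ t) (Set.Ici s) := by
      apply antitoneOn_of_deriv_nonpos (convex_Ici s) hdiff.continuous.continuousOn
        (hdiff.differentiableOn)
      intro t ht
      rw [interior_Ici] at ht
      rw [(haux t).deriv]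
      have : L1f ψ s ≤ L1f ψ t :=
        (strictMono_L1f hψ hδc hC).monotone (le_of_lt ht)
      linarith [hLs ▸ this]
    exact hanti (Set.mem_Ici.2 (le_refl s)) (Set.mem_Ici.2 hst) hst

lemma phiPot_eq (m : ℝ) :
    phiPot ψ m = sinv ψ m * m - LamF ψ (sinv ψ m) := by
  have hbody : ∀ τ : ℝ, τ * m - Real.log (∫ z : ℝ, Real.exp (τ * z - ψ z))
      = τ * m - LamF ψ τ := by
    intro τ
    have : (∫ z : ℝ, Real.exp (τ * z - ψ z)) = Gmom ψ 0 τ := by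
      rw [Gmom]; congr 1; funext z; rw [pow_zero, one_mul]
    rw [LamF, this]
  rw [phiPot]
  apply le_antisymm
  · apply ciSup_le
    intro τ
    rw [hbody τ]
    exact phi_max hψ hδc hC m τ
  · have hbdd : BddAbove (Set.range fun τ : ℝ =>
        τ * m - Real.log (∫ z : ℝ, Real.exp (τ * z - ψ z))) := by
      refine ⟨sinv ψ m * m - LamF ψ (sinv ψ m), ?_⟩
      rintro _ ⟨τ, rfl⟩
      simpa [hbody τ] using phi_max hψ hδc hC m τ
    have := le_ciSup hbdd (sinv ψ m)
    rw [hbody (sinv ψ m)] at this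
    exact this

lemma contDiff_sinv : ContDiff ℝ (⊤ : ℕ∞) (sinv ψ) :=
  contDiff_iff_contDiffAt.2 fun m => contDiffAt_sinv hψ hδc hC m

lemma contDiff_LamF : ContDiff ℝ (⊤ : ℕ∞) (LamF ψ) := by
  apply contDiff_iff_contDiffAt.2
  intro σ
  have h := (analyticAt_rlog (Gmom0_pos hψ hδc hC σ)).comp (analyticAt_Gmom hψ hδc hC 0 σ)
  exact h.contDiffAt

lemma contDiff_phiPot : ContDiff ℝ (⊤ : ℕ∞) (phiPot ψ) := by
  have he : phiPot ψ = fun m => sinv ψ m * m - LamF ψ (sinv ψ m) :=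
    funext (phiPot_eq hψ hδc hC)
  rw [he]
  exact ((contDiff_sinv hψ hδc hC).mul contDiff_id).sub
    ((contDiff_LamF hψ hδc hC).comp (contDiff_sinv hψ hδc hC))

lemma hasDerivAt_phiPot (m : ℝ) : HasDerivAt (phiPot ψ) (sinv ψ m) m := by
  have he : phiPot ψ = fun m => sinv ψ m * m - LamF ψ (sinv ψ m) :=
    funext (phiPot_eq hψ hδc hC)
  rw [he]
  set s := sinv ψ m with hs
  have h1 : HasDerivAt (fun y => sinv ψ y * y) (1 / Vf ψ s * m + s * 1) m :=
    (hasDerivAt_sinv hψ hδc hC m).mul (hasDerivAt_id m)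
  have h2 : HasDerivAt (fun y => LamF ψ (sinv ψ y)) (L1f ψ s * (1 / Vf ψ s)) m :=
    (hasDerivAt_LamF hψ hδc hC s).comp (h₂ := LamF ψ) m (hasDerivAt_sinv hψ hδc hC m)
  have h3 := h1.sub h2
  rw [L1f_sinv hψ hδc hC m] at h3
  exact h3.congr_deriv (by ring)

lemma deriv_phiPot : deriv (phiPot ψ) = sinv ψ :=
  funext fun m => (hasDerivAt_phiPot hψ hδc hC m).deriv

lemma deriv2_phiPot (m : ℝ) :
    deriv (deriv (phiPot ψ)) m = 1 / Vf ψ (sinv ψ m) := by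
  rw [deriv_phiPot hψ hδc hC]
  exact (hasDerivAt_sinv hψ hδc hC m).deriv

lemma deriv2_bounds (m : ℝ) :
    Real.exp (-(2 * C)) * (ZG / SG) ≤ deriv (deriv (phiPot ψ)) m ∧
      deriv (deriv (phiPot ψ)) m ≤ Real.exp (2 * C) * (ZG / SG) := by
  rw [deriv2_phiPot hψ hδc hC m]
  have hVpos := Vf_pos hψ hδc hC (sinv ψ m)
  have hVge := Vf_ge hψ hδc hC (sinv ψ m)
  have hVle := Vf_le hψ hδc hC (sinv ψ m)
  have hSG := SG_pos
  have hZG := ZG_pos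
  constructor
  · have h1 : 1 / (Real.exp (2 * C) * (SG / ZG)) ≤ 1 / Vf ψ (sinv ψ m) :=
      one_div_le_one_div_of_le hVpos hVle
    have h2 : 1 / (Real.exp (2 * C) * (SG / ZG)) = Real.exp (-(2 * C)) * (ZG / SG) := by
      rw [Real.exp_neg]
      field_simp
    linarith [h2 ▸ h1]
  · have h1 : 1 / Vf ψ (sinv ψ m) ≤ 1 / (Real.exp (-(2 * C)) * (SG / ZG)) :=
      one_div_le_one_div_of_le (lam0_pos (C := C)) hVge
    have h2 : 1 / (Real.exp (-(2 * C)) * (SG / ZG)) = Real.exp (2 * C) * (ZG / SG) := by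
      rw [Real.exp_neg]
      field_simp
    linarith [h2 ▸ h1]

lemma deriv_phiPot_zero (hnorm : (∫ z : ℝ, z * Real.exp (-ψ z)) = 0) :
    deriv (phiPot ψ) 0 = 0 := by
  rw [deriv_phiPot hψ hδc hC]
  have hG1 : Gmom ψ 1 0 = 0 := by
    have he : Gmom ψ 1 0 = ∫ z : ℝ, z * Real.exp (-ψ z) := by
      rw [Gmom]; congr 1; funext z; rw [pow_one, zero_mul, zero_sub]
    rw [he, hnorm]
  have hL10 : L1f ψ 0 = 0 := by
    rw [L1f, hG1, zero_div]
  calc sinv ψ 0 = sinv ψ (L1f ψ 0) := by rw [hL10]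
    _ = 0 := sinv_L1f hψ hδc hC 0

end Psi6

end SCPhi


end SCPhiDev

/-- **Strict convexity of the macroscopic free energy density `φ`** (Lemma 5.1):
`φ` is smooth, `φ'(0) = 0` and `0 < λ ≤ φ'' ≤ Λ < ∞`. -/
theorem strict_convexity_phi :
    ∀ Cψ : ℝ, 0 < Cψ → ∃ lam Lam : ℝ, 0 < lam ∧ lam ≤ Lam ∧
      ∀ ψ : ℝ → ℝ, PsiBase Cψ ψ → PsiNormalized ψ →
        ContDiff ℝ (⊤ : ℕ∞) (phiPot ψ) ∧ deriv (phiPot ψ) 0 = 0 ∧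
          ∀ m : ℝ, lam ≤ deriv (deriv (phiPot ψ)) m ∧ deriv (deriv (phiPot ψ)) m ≤ Lam := by
  intro Cψ hCψ
  have hZG := SCPhi.ZG_pos
  have hSG := SCPhi.SG_pos
  refine ⟨Real.exp (-(2 * Cψ)) * (SCPhi.ZG / SCPhi.SG),
    Real.exp (2 * Cψ) * (SCPhi.ZG / SCPhi.SG), ?_, ?_, ?_⟩
  · positivity
  · apply mul_le_mul_of_nonneg_right
    · exact Real.exp_le_exp.2 (by linarith)
    · positivity
  · intro ψ hbase hnorm
    obtain ⟨a, δψ, hδ2, hψ, hCb, -⟩ := hbase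
    have hδc : Continuous δψ := hδ2.continuous
    exact ⟨SCPhi.contDiff_phiPot hψ hδc hCb, SCPhi.deriv_phiPot_zero hψ hδc hCb hnorm,
      fun m => SCPhi.deriv2_bounds hψ hδc hCb m⟩

end
end

section
/- Near-identity property of PNP^t: There is a universal constant C such that the operator norm of PNP^t − id_{Y_M} on Y_M is at most C/K². In particular, if K = N/M is large enough, then PNP^t: Y_M → Y_M is invertible. -/
open MeasureTheory intervalIntegral Set

noncomputable section

-- ### basics

lemma IsSpline.cont {M : ℕ} {y : ℝ → ℝ} (h : IsSpline M y) : Continuous y :=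
  h.2.1.continuous

lemma IsSpline.contDeriv {M : ℕ} {y : ℝ → ℝ} (h : IsSpline M y) : Continuous (deriv y) :=
  h.2.1.continuous_deriv le_rfl

lemma IsSpline.zero (M : ℕ) : IsSpline M (fun _ => (0:ℝ)) := by
  refine ⟨fun _ => rfl, contDiff_const, by simp, fun m => ⟨0, 0, 0, fun θ _ => by ring⟩⟩

lemma IsSpline.add {M : ℕ} {y z : ℝ → ℝ} (hy : IsSpline M y) (hz : IsSpline M z) :
    IsSpline M (fun θ => y θ + z θ) := by
  obtain ⟨hp, hc, hm, hq⟩ := hy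
  obtain ⟨hp', hc', hm', hq'⟩ := hz
  refine ⟨fun θ => by simp [hp θ, hp' θ], hc.add hc', ?_, fun m => ?_⟩
  · rw [intervalIntegral.integral_add (hc.continuous.intervalIntegrable _ _)
      (hc'.continuous.intervalIntegrable _ _), hm, hm']; ring
  · obtain ⟨a, b, c, h1⟩ := hq m
    obtain ⟨a', b', c', h2⟩ := hq' m
    exact ⟨a + a', b + b', c + c', fun θ hθ => by simp only []; rw [h1 θ hθ, h2 θ hθ]; ring⟩

lemma IsSpline.smul {M : ℕ} {y : ℝ → ℝ} (r : ℝ) (hy : IsSpline M y) :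
    IsSpline M (fun θ => r * y θ) := by
  obtain ⟨hp, hc, hm, hq⟩ := hy
  refine ⟨fun θ => by simp [hp θ], hc.const_smul r, ?_, fun m => ?_⟩
  · rw [intervalIntegral.integral_const_mul, hm]; ring
  · obtain ⟨a, b, c, h1⟩ := hq m
    exact ⟨r * a, r * b, r * c, fun θ hθ => by simp only []; rw [h1 θ hθ]; ring⟩

lemma IsSpline.sub {M : ℕ} {y z : ℝ → ℝ} (hy : IsSpline M y) (hz : IsSpline M z) :
    IsSpline M (fun θ => y θ - z θ) := by
  have := hy.add (hz.smul (-1))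
  simpa [sub_eq_add_neg] using this

lemma periodic_eq_zero {y : ℝ → ℝ} (hp : Function.Periodic y 1)
    (h : ∀ t ∈ Set.Ico (0:ℝ) 1, y t = 0) : y = 0 := by
  funext θ
  have h1 : y (Int.fract θ) = y θ := by
    have h0 : y (θ - (⌊θ⌋:ℝ) * 1) = y θ := hp.sub_int_mul_eq (n := ⌊θ⌋)
    rw [Int.fract]; rw [mul_one] at h0; exact h0
  have h2 : Int.fract θ ∈ Set.Ico (0:ℝ) 1 := ⟨Int.fract_nonneg θ, Int.fract_lt_one θ⟩
  simp only [Pi.zero_apply]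
  rw [← h1]; exact h _ h2

lemma eq_zero_of_L2Sq_eq_zero {y : ℝ → ℝ} (hc : Continuous y)
    (hp : Function.Periodic y 1) (h : (∫ θ in (0:ℝ)..1, y θ ^ 2) = 0) : y = 0 := by
  have hnn : 0 ≤ᵐ[volume.restrict (Set.Ioc (0:ℝ) 1)] fun θ => y θ ^ 2 :=
    Filter.Eventually.of_forall fun θ => sq_nonneg _
  have hint : IntervalIntegrable (fun θ => y θ ^ 2) volume 0 1 :=
    (hc.pow 2).intervalIntegrable _ _
  have hae : (fun θ => y θ ^ 2) =ᵐ[volume.restrict (Set.Ioc (0:ℝ) 1)] 0 :=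
    ((intervalIntegral.integral_eq_zero_iff_of_le_of_nonneg_ae (by norm_num) hnn hint).mp h)
  have heq : Set.EqOn (fun θ => y θ ^ 2) 0 (Set.Ioc (0:ℝ) 1) := by
    apply Measure.eqOn_of_ae_eq hae ((hc.pow 2).continuousOn) continuousOn_const
    rw [interior_Ioc, closure_Ioo (by norm_num : (0:ℝ) ≠ 1)]
    exact Set.Ioc_subset_Icc_self
  apply periodic_eq_zero hp
  intro t ht
  rcases eq_or_lt_of_le ht.1 with h0 | h0
  · have h1 : y 1 = 0 := by
      have := heq (Set.mem_Ioc.mpr ⟨by norm_num, le_refl (1:ℝ)⟩)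
      exact pow_eq_zero_iff (by norm_num) |>.mp this
    have := hp 0
    simp only [zero_add] at this
    rw [← h0, ← this]
    exact h1
  · have := heq (Set.mem_Ioc.mpr ⟨h0, le_of_lt ht.2⟩)
    exact pow_eq_zero_iff (by norm_num) |>.mp this

lemma proj_unique {M : ℕ} {f u v : ℝ → ℝ} (hu : IsSpline M u) (hv : IsSpline M v)
    (hfint : IntervalIntegrable (fun θ => f θ * (u θ - v θ)) volume 0 1)
    (h1 : ∀ z, IsSpline M z → (∫ θ in (0:ℝ)..1, (f θ - u θ) * z θ) = 0)
    (h2 : ∀ z, IsSpline M z → (∫ θ in (0:ℝ)..1, (f θ - v θ) * z θ) = 0) : u = v := by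
  set w : ℝ → ℝ := fun θ => u θ - v θ with hw
  have hws : IsSpline M w := hu.sub hv
  have e1 := h1 w hws
  have e2 := h2 w hws
  have hui : IntervalIntegrable (fun θ => u θ * w θ) volume 0 1 :=
    (hu.cont.mul (hu.cont.sub hv.cont)).intervalIntegrable _ _
  have hvi : IntervalIntegrable (fun θ => v θ * w θ) volume 0 1 :=
    (hv.cont.mul (hu.cont.sub hv.cont)).intervalIntegrable _ _
  have key : (∫ θ in (0:ℝ)..1, w θ * w θ) = 0 := by
    have s1 : (∫ θ in (0:ℝ)..1, (f θ - u θ) * w θ) =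
        (∫ θ in (0:ℝ)..1, f θ * w θ) - ∫ θ in (0:ℝ)..1, u θ * w θ := by
      rw [← intervalIntegral.integral_sub hfint hui]
      congr 1; funext θ; ring
    have s2 : (∫ θ in (0:ℝ)..1, (f θ - v θ) * w θ) =
        (∫ θ in (0:ℝ)..1, f θ * w θ) - ∫ θ in (0:ℝ)..1, v θ * w θ := by
      rw [← intervalIntegral.integral_sub hfint hvi]
      congr 1; funext θ; ring
    have : (∫ θ in (0:ℝ)..1, u θ * w θ) = ∫ θ in (0:ℝ)..1, v θ * w θ := by
      rw [s1] at e1; rw [s2] at e2; linarith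
    have split : (∫ θ in (0:ℝ)..1, w θ * w θ) =
        (∫ θ in (0:ℝ)..1, u θ * w θ) - ∫ θ in (0:ℝ)..1, v θ * w θ := by
      rw [← intervalIntegral.integral_sub hui hvi]
      congr 1; funext θ; ring
    rw [split, this, sub_self]
  have : w = 0 := by
    apply eq_zero_of_L2Sq_eq_zero (hu.cont.sub hv.cont) (hu.1.sub hv.1)
    rw [← key]; congr 1; funext θ; simp only [Pi.sub_apply, hw]; ring
  funext θ
  have := congrFun this θ
  simp only [hw, Pi.zero_apply] at this
  linarith

-- ### step function lemmas

lemma stepFun_measurable (N : ℕ) (x : EuclideanSpace ℝ (Fin N)) :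
    Measurable (stepFun N x) := by
  unfold stepFun
  split_ifs with h
  · exact (measurable_from_top (f := fun k : ℤ => x ⟨k.toNat % N, Nat.mod_lt _ h⟩)).comp
      (Int.measurable_floor.comp (measurable_const_mul _))
  · exact measurable_const

lemma stepFun_bounded (N : ℕ) (x : EuclideanSpace ℝ (Fin N)) (θ : ℝ) :
    |stepFun N x θ| ≤ ∑ i, |x i| := by
  unfold stepFun
  split_ifs with h
  · exact Finset.single_le_sum (f := fun i => |x i|) (fun i _ => abs_nonneg _)
      (Finset.mem_univ _)
  · simpa using Finset.sum_nonneg (fun i (_ : i ∈ Finset.univ) => abs_nonneg (x i))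

lemma stepFun_mul_intervalIntegrable (N : ℕ) (x : EuclideanSpace ℝ (Fin N)) {w : ℝ → ℝ}
    (hw : Continuous w) (a b : ℝ) :
    IntervalIntegrable (fun θ => stepFun N x θ * w θ) volume a b := by
  rw [intervalIntegrable_iff]
  apply Integrable.bdd_mul (c := ∑ i, |x i|) (hw.integrableOn_uIoc)
    ((stepFun_measurable N x).aestronglyMeasurable)
  exact Filter.Eventually.of_forall fun θ => by simpa [Real.norm_eq_abs] using stepFun_bounded N x θ

lemma stepFun_eq_on (N : ℕ) (hN : 0 < N) (x : EuclideanSpace ℝ (Fin N)) (i : ℕ) (hi : i < N)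
    {θ : ℝ} (hθ : θ ∈ Set.Ioo ((i:ℝ)/N) (((i:ℝ)+1)/N)) : stepFun N x θ = x ⟨i, hi⟩ := by
  have hN' : (0:ℝ) < N := by exact_mod_cast hN
  have hfl : ⌊(N:ℝ) * θ⌋ = (i : ℤ) := by
    rw [Int.floor_eq_iff]
    constructor
    · have := (div_lt_iff₀ hN').mp hθ.1
      push_cast
      linarith [mul_comm θ (N:ℝ)]
    · have := (lt_div_iff₀ hN').mp hθ.2
      push_cast
      linarith [mul_comm θ (N:ℝ)]
  simp only [stepFun, dif_pos hN, hfl]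
  apply congrArg
  apply Fin.ext
  simp only [hfl, Int.toNat_natCast]
  exact Nat.mod_eq_of_lt hi

lemma stepFun_integral_cell (N : ℕ) (hN : 0 < N) (x : EuclideanSpace ℝ (Fin N)) (i : ℕ)
    (hi : i < N) {w : ℝ → ℝ} (hw : Continuous w) :
    (∫ θ in ((i:ℝ)/N)..(((i:ℝ)+1)/N), stepFun N x θ * w θ) =
      x ⟨i, hi⟩ * ∫ θ in ((i:ℝ)/N)..(((i:ℝ)+1)/N), w θ := by
  have hN' : (0:ℝ) < N := by exact_mod_cast hN
  have hab : (i:ℝ)/N < ((i:ℝ)+1)/N := by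
    apply div_lt_div_of_pos_right (by linarith) hN'
  have hae : ∀ᵐ θ : ℝ, θ ∈ Set.uIoc ((i:ℝ)/N) (((i:ℝ)+1)/N) →
      stepFun N x θ * w θ = x ⟨i, hi⟩ * w θ := by
    have hsing : (volume : Measure ℝ) {(((i:ℝ)+1)/N)} = 0 := Real.volume_singleton
    filter_upwards [measure_eq_zero_iff_ae_notMem.mp hsing] with θ hne hmem
    rw [Set.uIoc_of_le hab.le] at hmem
    have hlt : θ < ((i:ℝ)+1)/N := lt_of_le_of_ne hmem.2 (by simpa using hne)
    rw [stepFun_eq_on N hN x i hi ⟨hmem.1, hlt⟩]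
  rw [intervalIntegral.integral_congr_ae hae, intervalIntegral.integral_const_mul]

-- ### cell Poincaré estimates

lemma cell_dev_bound {f : ℝ → ℝ} (hf : ContDiff ℝ 1 f) {a b : ℝ} (hab : a < b) {θ : ℝ}
    (hθ : θ ∈ Set.Icc a b) :
    |f θ - (∫ t in a..b, f t) / (b - a)| ≤ ∫ t in a..b, |deriv f t| := by
  have hba : (0:ℝ) < b - a := by linarith
  have hfc : Continuous f := hf.continuous
  have hf' : Continuous (deriv f) := hf.continuous_deriv le_rfl
  have habs : IntervalIntegrable (fun t => |deriv f t|) volume a b :=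
    (hf'.abs).intervalIntegrable _ _
  set If := ∫ t in a..b, |deriv f t| with hIf
  have step : ∀ t ∈ Set.Icc a b, |f θ - f t| ≤ If := by
    intro t ht
    have hftc : (∫ s in t..θ, deriv f s) = f θ - f t :=
      intervalIntegral.integral_deriv_eq_sub
        (fun x _ => (hf.differentiable one_ne_zero).differentiableAt)
        (hf'.intervalIntegrable _ _)
    rw [← hftc]
    calc |(∫ s in t..θ, deriv f s)| ≤ |(∫ s in t..θ, |deriv f s|)| :=
          by simpa [Real.norm_eq_abs] using
            intervalIntegral.norm_integral_le_abs_integral_norm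
              (f := fun s => deriv f s) (a := t) (b := θ) (μ := volume)
      _ ≤ If := by
        rcases le_total t θ with h | h
        · rw [abs_of_nonneg (intervalIntegral.integral_nonneg h (fun s _ => abs_nonneg _))]
          exact intervalIntegral.integral_mono_interval ht.1 h hθ.2
            (Filter.Eventually.of_forall fun s => abs_nonneg _) habs
        · rw [intervalIntegral.integral_symm,
            abs_neg, abs_of_nonneg (intervalIntegral.integral_nonneg h (fun s _ => abs_nonneg _))]
          exact intervalIntegral.integral_mono_interval hθ.1 h ht.2
            (Filter.Eventually.of_forall fun s => abs_nonneg _) habs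
  have key : f θ - (∫ t in a..b, f t) / (b - a) =
      (∫ t in a..b, (f θ - f t)) / (b - a) := by
    rw [intervalIntegral.integral_sub (intervalIntegrable_const)
      (hfc.intervalIntegrable _ _), intervalIntegral.integral_const]
    field_simp
    ring
  rw [key, abs_div, abs_of_pos hba, div_le_iff₀ hba]
  calc |(∫ t in a..b, (f θ - f t))| ≤ ∫ t in a..b, |f θ - f t| :=
        intervalIntegral.abs_integral_le_integral_abs hab.le
    _ ≤ ∫ t in a..b, If := by
        apply intervalIntegral.integral_mono_on hab.le
          ((continuous_const.sub hfc).abs.intervalIntegrable _ _) intervalIntegrable_const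
        exact fun t ht => step t ht
    _ = If * (b - a) := by rw [intervalIntegral.integral_const]; simp [smul_eq_mul]; ring

lemma intAbs_le_sqrt {g : ℝ → ℝ} (hg : Continuous g) {a b : ℝ} (hab : a < b) :
    (∫ t in a..b, |g t|) ≤ Real.sqrt (b - a) * Real.sqrt (∫ t in a..b, g t ^ 2) := by
  have hba : (0:ℝ) < b - a := by linarith
  set If := ∫ t in a..b, |g t| with hIf
  have hIfnn : 0 ≤ If := intervalIntegral.integral_nonneg hab.le (fun s _ => abs_nonneg _)
  set c := If / (b - a) with hc
  have h0 : 0 ≤ ∫ t in a..b, (|g t| - c)^2 :=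
    intervalIntegral.integral_nonneg hab.le (fun s _ => sq_nonneg _)
  have hexp : (∫ t in a..b, (|g t| - c)^2) =
      (∫ t in a..b, g t ^ 2) - 2 * c * If + c^2 * (b - a) := by
    have e1 : ∀ t : ℝ, (|g t| - c)^2 = g t ^ 2 - (2 * c) * |g t| + c^2 := by
      intro t; rw [sub_sq, sq_abs]; ring
    rw [intervalIntegral.integral_congr (fun t _ => e1 t)]
    rw [intervalIntegral.integral_add (((hg.fun_pow 2).intervalIntegrable _ _).sub
        ((hg.abs.intervalIntegrable _ _).const_mul _)) intervalIntegrable_const,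
      intervalIntegral.integral_sub ((hg.fun_pow 2).intervalIntegrable _ _)
        ((hg.abs.intervalIntegrable _ _).const_mul _),
      intervalIntegral.integral_const_mul, intervalIntegral.integral_const]
    simp only [smul_eq_mul, ← hIf]
    ring
  have key : If ^ 2 ≤ (b - a) * ∫ t in a..b, g t ^ 2 := by
    rw [hexp, hc] at h0
    have h2 : 0 ≤ (∫ t in a..b, g t ^ 2) - If^2 / (b - a) := by
      have : 2 * (If / (b-a)) * If - (If / (b-a))^2 * (b-a) = If^2/(b-a) := by
        field_simp; ring
      nlinarith [h0]
    have h3 : If^2/(b-a) ≤ ∫ t in a..b, g t ^ 2 := by linarith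
    have h4 := (div_le_iff₀ hba).mp h3
    linarith [h4]
  calc If = Real.sqrt (If ^ 2) := by rw [Real.sqrt_sq hIfnn]
    _ ≤ Real.sqrt ((b - a) * ∫ t in a..b, g t ^ 2) := Real.sqrt_le_sqrt key
    _ = Real.sqrt (b - a) * Real.sqrt (∫ t in a..b, g t ^ 2) := Real.sqrt_mul hba.le _

lemma cell_cov_bound {f g : ℝ → ℝ} (hf : ContDiff ℝ 1 f) (hg : ContDiff ℝ 1 g)
    {a b : ℝ} (hab : a < b) :
    |(∫ θ in a..b, (f θ - (∫ t in a..b, f t) / (b - a)) * g θ)| ≤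
      (b - a)^2 * (Real.sqrt (∫ θ in a..b, deriv f θ ^ 2) *
        Real.sqrt (∫ θ in a..b, deriv g θ ^ 2)) := by
  have hba : (0:ℝ) < b - a := by linarith
  have hfc : Continuous f := hf.continuous
  have hgc : Continuous g := hg.continuous
  set cf := (∫ t in a..b, f t) / (b - a) with hcf
  set cg := (∫ t in a..b, g t) / (b - a) with hcg
  set If := ∫ t in a..b, |deriv f t| with hIf
  set Ig := ∫ t in a..b, |deriv g t| with hIg
  have hIfnn : 0 ≤ If := intervalIntegral.integral_nonneg hab.le (fun s _ => abs_nonneg _)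
  have hIgnn : 0 ≤ Ig := intervalIntegral.integral_nonneg hab.le (fun s _ => abs_nonneg _)
  -- reduce to centered product
  have hzero : (∫ θ in a..b, (f θ - cf)) = 0 := by
    rw [intervalIntegral.integral_sub (hfc.intervalIntegrable _ _) intervalIntegrable_const,
      intervalIntegral.integral_const, hcf, smul_eq_mul]
    field_simp; ring
  have hred : (∫ θ in a..b, (f θ - cf) * g θ) = ∫ θ in a..b, (f θ - cf) * (g θ - cg) := by
    have e : ∀ θ : ℝ, (f θ - cf) * (g θ - cg) = (f θ - cf) * g θ - cg * (f θ - cf) := by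
      intro θ; ring
    rw [intervalIntegral.integral_congr (fun θ _ => e θ),
      intervalIntegral.integral_sub
        (((hfc.fun_sub continuous_const).fun_mul hgc).intervalIntegrable _ _)
        ((continuous_const.fun_mul (hfc.fun_sub continuous_const)).intervalIntegrable _ _),
      intervalIntegral.integral_const_mul, hzero, mul_zero, sub_zero]
  rw [hred]
  have habs : |(∫ θ in a..b, (f θ - cf) * (g θ - cg))| ≤ (b - a) * (If * Ig) := by
    calc |(∫ θ in a..b, (f θ - cf) * (g θ - cg))|
        ≤ ∫ θ in a..b, |(f θ - cf) * (g θ - cg)| :=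
          intervalIntegral.abs_integral_le_integral_abs hab.le
      _ ≤ ∫ θ in a..b, If * Ig := by
          apply intervalIntegral.integral_mono_on hab.le
            (((hfc.fun_sub continuous_const).fun_mul (hgc.fun_sub continuous_const)).abs.intervalIntegrable _ _)
            intervalIntegrable_const
          intro θ hθ
          rw [abs_mul]
          exact mul_le_mul (cell_dev_bound hf hab hθ) (cell_dev_bound hg hab hθ)
            (abs_nonneg _) hIfnn
      _ = (b - a) * (If * Ig) := by rw [intervalIntegral.integral_const, smul_eq_mul]
  have hIfs := intAbs_le_sqrt (hf.continuous_deriv le_rfl) hab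
  have hIgs := intAbs_le_sqrt (hg.continuous_deriv le_rfl) hab
  rw [← hIf] at hIfs
  rw [← hIg] at hIgs
  set Sf := Real.sqrt (∫ θ in a..b, deriv f θ ^ 2) with hSf
  set Sg := Real.sqrt (∫ θ in a..b, deriv g θ ^ 2) with hSg
  have hSfnn : 0 ≤ Sf := Real.sqrt_nonneg _
  have hSgnn : 0 ≤ Sg := Real.sqrt_nonneg _
  have hs : Real.sqrt (b-a) * Real.sqrt (b-a) = b - a := Real.mul_self_sqrt hba.le
  calc |(∫ θ in a..b, (f θ - cf) * (g θ - cg))| ≤ (b - a) * (If * Ig) := habs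
    _ ≤ (b - a) * ((Real.sqrt (b-a) * Sf) * (Real.sqrt (b-a) * Sg)) := by
        apply mul_le_mul_of_nonneg_left _ hba.le
        exact mul_le_mul hIfs hIgs hIgnn (by positivity)
    _ = ((b - a) * (Real.sqrt (b-a) * Real.sqrt (b-a))) * (Sf * Sg) := by ring
    _ = (b - a)^2 * (Sf * Sg) := by rw [hs]; ring

-- ### quadratic polynomial integrals and inverse estimate

lemma integral_quad_sq (a b c α β : ℝ) :
    (∫ θ in α..β, (a*θ^2 + b*θ + c)^2) =
      (a^2*β^5/5 + a*b*β^4/2 + (b^2 + 2*a*c)*β^3/3 + b*c*β^2 + c^2*β) -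
      (a^2*α^5/5 + a*b*α^4/2 + (b^2 + 2*a*c)*α^3/3 + b*c*α^2 + c^2*α) := by
  apply intervalIntegral.integral_eq_sub_of_hasDerivAt
  · intro x _
    have h : HasDerivAt (fun θ : ℝ => a^2*θ^5/5 + a*b*θ^4/2 + (b^2 + 2*a*c)*θ^3/3 +
        b*c*θ^2 + c^2*θ)
        (a^2*(5*x^4)/5 + a*b*(4*x^3)/2 + (b^2 + 2*a*c)*(3*x^2)/3 + b*c*(2*x) + c^2) x := by
      have h5 := (hasDerivAt_pow 5 x)
      have h4 := (hasDerivAt_pow 4 x)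
      have h3 := (hasDerivAt_pow 3 x)
      have h2 := (hasDerivAt_pow 2 x)
      have h1 := (hasDerivAt_id x)
      have := ((((h5.const_mul (a^2/5)).fun_add (h4.const_mul (a*b/2))).fun_add
        (h3.const_mul ((b^2 + 2*a*c)/3))).fun_add (h2.const_mul (b*c))).fun_add (h1.const_mul (c^2))
      convert this using 1
      · rfl
      · rfl
      · funext θ; simp only [id_eq]; push_cast; ring
      · push_cast; ring
    convert h using 1
    · rfl
    · rfl
    ring
  · exact (by continuity : Continuous fun θ : ℝ => (a*θ^2 + b*θ + c)^2).intervalIntegrable _ _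

lemma integral_quadderiv_sq (a b α β : ℝ) :
    (∫ θ in α..β, (2*a*θ + b)^2) =
      (4*a^2*β^3/3 + 2*a*b*β^2 + b^2*β) - (4*a^2*α^3/3 + 2*a*b*α^2 + b^2*α) := by
  apply intervalIntegral.integral_eq_sub_of_hasDerivAt
  · intro x _
    have h3 := (hasDerivAt_pow 3 x)
    have h2 := (hasDerivAt_pow 2 x)
    have h1 := (hasDerivAt_id x)
    have := ((h3.const_mul (4*a^2/3)).fun_add (h2.const_mul (2*a*b))).fun_add (h1.const_mul (b^2))
    convert this using 1
    · funext θ; simp only [id_eq]; push_cast; ring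
    · push_cast; ring
  · exact (by continuity : Continuous fun θ : ℝ => (2*a*θ + b)^2).intervalIntegrable _ _

lemma quad_deriv_on_Ioo {y : ℝ → ℝ} {a b c α β : ℝ}
    (hq : ∀ θ ∈ Set.Icc α β, y θ = a*θ^2 + b*θ + c) {θ : ℝ} (hθ : θ ∈ Set.Ioo α β) :
    deriv y θ = 2*a*θ + b := by
  have hnb : Set.Ioo α β ∈ nhds θ := Ioo_mem_nhds hθ.1 hθ.2
  have hev : y =ᶠ[nhds θ] fun t => a*t^2 + b*t + c := by
    filter_upwards [hnb] with t ht
    exact hq t (Set.Ioo_subset_Icc_self ht)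
  rw [hev.deriv_eq]
  have h : HasDerivAt (fun t : ℝ => a*t^2 + b*t + c) (2*a*θ + b) θ := by
    have h2 := (hasDerivAt_pow 2 θ)
    have h1 := (hasDerivAt_id θ)
    have := ((h2.const_mul a).fun_add (h1.const_mul b)).fun_add (hasDerivAt_const θ c)
    convert this using 1
    · rfl
    · rfl
    · funext t; simp only [id_eq]
    push_cast; ring
  exact h.deriv

lemma cell_inverse {y : ℝ → ℝ} (hy : ContDiff ℝ 1 y) {a b c α β : ℝ} (hαβ : α < β)
    (hq : ∀ θ ∈ Set.Icc α β, y θ = a*θ^2 + b*θ + c) :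
    (β - α)^2 * (∫ θ in α..β, deriv y θ ^ 2) ≤ 60 * ∫ θ in α..β, y θ ^ 2 := by
  have h1 : (∫ θ in α..β, y θ ^ 2) = ∫ θ in α..β, (a*θ^2 + b*θ + c)^2 :=
    intervalIntegral.integral_congr (fun θ hθ => by
      rw [Set.uIcc_of_le hαβ.le] at hθ; rw [hq θ hθ])
  have h2 : (∫ θ in α..β, deriv y θ ^ 2) = ∫ θ in α..β, (2*a*θ + b)^2 := by
    apply intervalIntegral.integral_congr_ae
    have hsing : (volume : Measure ℝ) {β} = 0 := Real.volume_singleton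
    filter_upwards [measure_eq_zero_iff_ae_notMem.mp hsing] with θ hne hmem
    rw [Set.uIoc_of_le hαβ.le] at hmem
    have hlt : θ < β := lt_of_le_of_ne hmem.2 (by simpa using hne)
    rw [quad_deriv_on_Ioo hq ⟨hmem.1, hlt⟩]
  rw [h1, h2, integral_quad_sq, integral_quadderiv_sq]
  have hkey : 60 * ((a^2*β^5/5 + a*b*β^4/2 + (b^2 + 2*a*c)*β^3/3 + b*c*β^2 + c^2*β) -
      (a^2*α^5/5 + a*b*α^4/2 + (b^2 + 2*a*c)*α^3/3 + b*c*α^2 + c^2*α)) -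
      (β - α)^2 * ((4*a^2*β^3/3 + 2*a*b*β^2 + b^2*β) - (4*a^2*α^3/3 + 2*a*b*α^2 + b^2*α)) =
      (β - α) * (60 * ((a*α^2 + b*α + c) + a*(β-α)^2/3 + (2*a*α+b)*(β-α)/2)^2 +
        4 * (a*(β-α)^2 + (2*a*α+b)*(β-α))^2) := by
    ring
  nlinarith [mul_nonneg (by linarith : (0:ℝ) ≤ β - α)
    (by positivity : (0:ℝ) ≤ 60 * ((a*α^2 + b*α + c) + a*(β-α)^2/3 + (2*a*α+b)*(β-α)/2)^2 +
      4 * (a*(β-α)^2 + (2*a*α+b)*(β-α))^2)]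

-- ### global spline inverse estimate

lemma spline_cells {M : ℕ} (hM : 0 < M) {f : ℝ → ℝ}
    (hf : ∀ k, k < M → IntervalIntegrable f volume ((k:ℝ)/M) (((k:ℝ)+1)/M)) :
    (∑ k ∈ Finset.range M, ∫ θ in ((k:ℝ)/M)..(((k:ℝ)+1)/M), f θ) = ∫ θ in (0:ℝ)..1, f θ := by
  have hM' : (0:ℝ) < M := by exact_mod_cast hM
  have key := intervalIntegral.sum_integral_adjacent_intervals (a := fun k : ℕ => (k:ℝ)/M)
    (n := M) (f := f) (μ := volume) (by
      intro k hk
      have := hf k hk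
      convert this using 2
      push_cast; ring)
  have h0 : ((0:ℕ):ℝ)/(M:ℝ) = 0 := by simp
  have h1 : ((M:ℕ):ℝ)/(M:ℝ) = 1 := by field_simp
  rw [h0, h1] at key
  rw [← key]
  apply Finset.sum_congr rfl
  intro k _
  congr 1
  push_cast; ring

lemma spline_deriv_L2 {M : ℕ} (hM : 0 < M) {y : ℝ → ℝ} (hy : IsSpline M y) :
    (∫ θ in (0:ℝ)..1, deriv y θ ^ 2) ≤ 60 * (M:ℝ)^2 * ∫ θ in (0:ℝ)..1, y θ ^ 2 := by
  have hM' : (0:ℝ) < M := by exact_mod_cast hM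
  have e1 := spline_cells hM (f := fun θ => deriv y θ ^ 2)
    (fun k _ => (hy.contDeriv.pow 2).intervalIntegrable _ _)
  have e2 := spline_cells hM (f := fun θ => y θ ^ 2)
    (fun k _ => ((hy.cont.pow 2)).intervalIntegrable _ _)
  rw [← e1, ← e2, Finset.mul_sum]
  apply Finset.sum_le_sum
  intro k hk
  have hkM : k < M := Finset.mem_range.mp hk
  obtain ⟨a, b, c, hq⟩ := hy.2.2.2 ⟨k, hkM⟩
  have hcast : ((⟨k, hkM⟩ : Fin M) : ℝ) = (k : ℝ) := by norm_cast
  rw [hcast] at hq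
  have hαβ : (k:ℝ)/M < ((k:ℝ)+1)/M := by
    apply div_lt_div_of_pos_right (by linarith) hM'
  have hci := cell_inverse hy.2.1 hαβ hq
  have hdiff : ((k:ℝ)+1)/M - (k:ℝ)/M = 1/M := by field_simp; ring
  rw [hdiff] at hci
  have h2 : (1/(M:ℝ))^2 > 0 := by positivity
  calc (∫ θ in ((k:ℝ)/M)..(((k:ℝ)+1)/M), deriv y θ ^ 2)
      = (M:ℝ)^2 * ((1/(M:ℝ))^2 * ∫ θ in ((k:ℝ)/M)..(((k:ℝ)+1)/M), deriv y θ ^ 2) := by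
        field_simp
    _ ≤ (M:ℝ)^2 * (60 * ∫ θ in ((k:ℝ)/M)..(((k:ℝ)+1)/M), y θ ^ 2) := by
        apply mul_le_mul_of_nonneg_left hci (by positivity)
    _ = 60 * (M:ℝ)^2 * ∫ θ in ((k:ℝ)/M)..(((k:ℝ)+1)/M), y θ ^ 2 := by ring

-- ### main estimate

lemma main_estimate {N M K : ℕ} (hM : 0 < M) (hK : 0 < K) (hNK : N = K * M)
    {P : (ℝ → ℝ) → ℝ → ℝ} (hP : IsL2Projection M P) {y : ℝ → ℝ} (hy : IsSpline M y) :
    Real.sqrt (L2Sq (fun θ => P (stepFun N (NPt N y)) θ - y θ)) ≤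
      60 / (K : ℝ) ^ 2 * Real.sqrt (L2Sq y) := by
  have hN : 0 < N := by rw [hNK]; exact Nat.mul_pos hK hM
  have hN' : (0:ℝ) < N := by exact_mod_cast hN
  have hK' : (0:ℝ) < K := by exact_mod_cast hK
  have hM' : (0:ℝ) < M := by exact_mod_cast hM
  set s : ℝ → ℝ := stepFun N (NPt N y) with hs
  set Ps : ℝ → ℝ := P s with hPsdef
  set r : ℝ → ℝ := fun θ => Ps θ - y θ with hrdef
  have hPs : IsSpline M Ps := (hP s).1
  have hr : IsSpline M r := hPs.sub hy
  have hrc : Continuous r := hr.cont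
  have hyc : Continuous y := hy.cont
  have horth : (∫ θ in (0:ℝ)..1, (s θ - Ps θ) * r θ) = 0 := (hP s).2 r hr
  -- interval integrability helpers
  have hsr : ∀ a b : ℝ, IntervalIntegrable (fun θ => s θ * r θ) volume a b :=
    fun a b => stepFun_mul_intervalIntegrable N _ hrc a b
  have hyr : ∀ a b : ℝ, IntervalIntegrable (fun θ => y θ * r θ) volume a b :=
    fun a b => (hyc.mul hrc).intervalIntegrable a b
  have hPsr : ∀ a b : ℝ, IntervalIntegrable (fun θ => Ps θ * r θ) volume a b :=
    fun a b => (hPs.cont.mul hrc).intervalIntegrable a b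
  have hsyr : ∀ a b : ℝ, IntervalIntegrable (fun θ => (s θ - y θ) * r θ) volume a b := by
    intro a b
    have : (fun θ => (s θ - y θ) * r θ) = fun θ => s θ * r θ - y θ * r θ :=
      funext fun θ => by ring
    rw [this]; exact (hsr a b).sub (hyr a b)
  -- step 1 : ∫ r² = ∫ (s - y) r
  have step1 : (∫ θ in (0:ℝ)..1, r θ ^ 2) = ∫ θ in (0:ℝ)..1, (s θ - y θ) * r θ := by
    have e0 : (∫ θ in (0:ℝ)..1, r θ ^ 2) = ∫ θ in (0:ℝ)..1, (Ps θ - s θ) * r θ +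
        (s θ - y θ) * r θ := by
      apply intervalIntegral.integral_congr
      intro θ _
      simp only [hrdef]
      ring
    have e1 : (∫ θ in (0:ℝ)..1, (Ps θ - s θ) * r θ + (s θ - y θ) * r θ) =
        (∫ θ in (0:ℝ)..1, (Ps θ - s θ) * r θ) + ∫ θ in (0:ℝ)..1, (s θ - y θ) * r θ := by
      apply intervalIntegral.integral_add _ (hsyr 0 1)
      have : (fun θ => (Ps θ - s θ) * r θ) = fun θ => Ps θ * r θ - s θ * r θ :=
        funext fun θ => by ring
      rw [this]; exact (hPsr 0 1).sub (hsr 0 1)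
    have e2 : (∫ θ in (0:ℝ)..1, (Ps θ - s θ) * r θ) = 0 := by
      have : (fun θ => (Ps θ - s θ) * r θ) = fun θ => -((s θ - Ps θ) * r θ) :=
        funext fun θ => by ring
      rw [this, intervalIntegral.integral_neg, horth, neg_zero]
    rw [e0, e1, e2, zero_add]
  -- step 2 : cell decomposition and covariance bound
  set u : ℕ → ℝ := fun i => Real.sqrt (∫ θ in ((i:ℝ)/N)..(((i:ℝ)+1)/N), deriv y θ ^ 2) with hu
  set v : ℕ → ℝ := fun i => Real.sqrt (∫ θ in ((i:ℝ)/N)..(((i:ℝ)+1)/N), deriv r θ ^ 2) with hv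
  have hcell : ∀ i, i < N → |(∫ θ in ((i:ℝ)/N)..(((i:ℝ)+1)/N), (s θ - y θ) * r θ)| ≤
      (1/(N:ℝ))^2 * (u i * v i) := by
    intro i hi
    have hab : (i:ℝ)/N < ((i:ℝ)+1)/N := div_lt_div_of_pos_right (by linarith) hN'
    have hdiff : ((i:ℝ)+1)/N - (i:ℝ)/N = 1/N := by field_simp; ring
    -- value of the step function
    have hx : NPt N y ⟨i, hi⟩ = (∫ t in ((i:ℝ)/N)..(((i:ℝ)+1)/N), y t) / (1/(N:ℝ)) := by
      have hcast : ((⟨i, hi⟩ : Fin N) : ℝ) = (i : ℝ) := by norm_cast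
      simp only [NPt, hcast]
      field_simp
    have e3 : (∫ θ in ((i:ℝ)/N)..(((i:ℝ)+1)/N), (s θ - y θ) * r θ) =
        -∫ θ in ((i:ℝ)/N)..(((i:ℝ)+1)/N),
          (y θ - (∫ t in ((i:ℝ)/N)..(((i:ℝ)+1)/N), y t) / (((i:ℝ)+1)/N - (i:ℝ)/N)) * r θ := by
      rw [hdiff, ← intervalIntegral.integral_neg]
      have esplit : (∫ θ in ((i:ℝ)/N)..(((i:ℝ)+1)/N), (s θ - y θ) * r θ) =
          (∫ θ in ((i:ℝ)/N)..(((i:ℝ)+1)/N), s θ * r θ) -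
            ∫ θ in ((i:ℝ)/N)..(((i:ℝ)+1)/N), y θ * r θ := by
        have : (fun θ => (s θ - y θ) * r θ) = fun θ => s θ * r θ - y θ * r θ :=
          funext fun θ => by ring
        rw [this]; exact intervalIntegral.integral_sub (hsr _ _) (hyr _ _)
      have escell : (∫ θ in ((i:ℝ)/N)..(((i:ℝ)+1)/N), s θ * r θ) =
          NPt N y ⟨i, hi⟩ * ∫ θ in ((i:ℝ)/N)..(((i:ℝ)+1)/N), r θ :=
        stepFun_integral_cell N hN (NPt N y) i hi hrc
      have eexp : (∫ θ in ((i:ℝ)/N)..(((i:ℝ)+1)/N),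
          -((y θ - (∫ t in ((i:ℝ)/N)..(((i:ℝ)+1)/N), y t) / (1/(N:ℝ))) * r θ)) =
          (NPt N y ⟨i, hi⟩) * (∫ θ in ((i:ℝ)/N)..(((i:ℝ)+1)/N), r θ) -
            ∫ θ in ((i:ℝ)/N)..(((i:ℝ)+1)/N), y θ * r θ := by
        have : (fun θ => -((y θ - (∫ t in ((i:ℝ)/N)..(((i:ℝ)+1)/N), y t) / (1/(N:ℝ))) * r θ)) =
            fun θ => ((∫ t in ((i:ℝ)/N)..(((i:ℝ)+1)/N), y t) / (1/(N:ℝ))) * r θ - y θ * r θ :=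
          funext fun θ => by ring
        rw [this, intervalIntegral.integral_sub ((hrc.intervalIntegrable _ _).const_mul _)
          (hyr _ _), intervalIntegral.integral_const_mul, ← hx]
      rw [esplit, eexp, escell]
    rw [e3, abs_neg]
    calc |(∫ θ in ((i:ℝ)/N)..(((i:ℝ)+1)/N),
          (y θ - (∫ t in ((i:ℝ)/N)..(((i:ℝ)+1)/N), y t) / (((i:ℝ)+1)/N - (i:ℝ)/N)) * r θ)|
        ≤ (((i:ℝ)+1)/N - (i:ℝ)/N)^2 * (u i * v i) := cell_cov_bound hy.2.1 hr.2.1 hab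
      _ = (1/(N:ℝ))^2 * (u i * v i) := by rw [hdiff]
  -- step 3 : sum up
  have hsum : (∫ θ in (0:ℝ)..1, (s θ - y θ) * r θ) =
      ∑ i ∈ Finset.range N, ∫ θ in ((i:ℝ)/N)..(((i:ℝ)+1)/N), (s θ - y θ) * r θ :=
    (spline_cells hN (fun i _ => hsyr _ _)).symm
  have hunn : ∀ i, 0 ≤ u i := fun i => Real.sqrt_nonneg _
  have hvnn : ∀ i, 0 ≤ v i := fun i => Real.sqrt_nonneg _
  have hcs : (∑ i ∈ Finset.range N, u i * v i) ≤
      Real.sqrt (∑ i ∈ Finset.range N, u i ^ 2) * Real.sqrt (∑ i ∈ Finset.range N, v i ^ 2) := by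
    have h := Finset.sum_mul_sq_le_sq_mul_sq (Finset.range N) u v
    have hnn : 0 ≤ ∑ i ∈ Finset.range N, u i * v i :=
      Finset.sum_nonneg fun i _ => mul_nonneg (hunn i) (hvnn i)
    calc (∑ i ∈ Finset.range N, u i * v i)
        = Real.sqrt ((∑ i ∈ Finset.range N, u i * v i) ^ 2) := (Real.sqrt_sq hnn).symm
      _ ≤ Real.sqrt ((∑ i ∈ Finset.range N, u i ^ 2) * ∑ i ∈ Finset.range N, v i ^ 2) :=
          Real.sqrt_le_sqrt h
      _ = _ := Real.sqrt_mul (Finset.sum_nonneg fun i _ => sq_nonneg _) _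
  have husq : (∑ i ∈ Finset.range N, u i ^ 2) = ∫ θ in (0:ℝ)..1, deriv y θ ^ 2 := by
    rw [← spline_cells hN (fun i _ => (hy.contDeriv.fun_pow 2).intervalIntegrable _ _)]
    apply Finset.sum_congr rfl
    intro i hi
    exact Real.sq_sqrt (intervalIntegral.integral_nonneg
      (le_of_lt (div_lt_div_of_pos_right (by linarith) hN')) fun θ _ => sq_nonneg _)
  have hvsq : (∑ i ∈ Finset.range N, v i ^ 2) = ∫ θ in (0:ℝ)..1, deriv r θ ^ 2 := by
    rw [← spline_cells hN (fun i _ => (hr.contDeriv.fun_pow 2).intervalIntegrable _ _)]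
    apply Finset.sum_congr rfl
    intro i hi
    exact Real.sq_sqrt (intervalIntegral.integral_nonneg
      (le_of_lt (div_lt_div_of_pos_right (by linarith) hN')) fun θ _ => sq_nonneg _)
  -- step 4 : inverse estimates
  set Y := Real.sqrt (∫ θ in (0:ℝ)..1, y θ ^ 2) with hY
  set R := Real.sqrt (∫ θ in (0:ℝ)..1, r θ ^ 2) with hR
  have hYnn : 0 ≤ Y := Real.sqrt_nonneg _
  have hRnn : 0 ≤ R := Real.sqrt_nonneg _
  have hinv1 : Real.sqrt (∫ θ in (0:ℝ)..1, deriv y θ ^ 2) ≤ Real.sqrt (60 * (M:ℝ)^2) * Y := by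
    rw [← Real.sqrt_mul (by positivity) _]
    exact Real.sqrt_le_sqrt (spline_deriv_L2 hM hy)
  have hinv2 : Real.sqrt (∫ θ in (0:ℝ)..1, deriv r θ ^ 2) ≤ Real.sqrt (60 * (M:ℝ)^2) * R := by
    rw [← Real.sqrt_mul (by positivity) _]
    exact Real.sqrt_le_sqrt (spline_deriv_L2 hM hr)
  -- put everything together
  have main : R ^ 2 ≤ 60 / (K:ℝ)^2 * (Y * R) := by
    have h1 : R ^ 2 = ∫ θ in (0:ℝ)..1, r θ ^ 2 :=
      Real.sq_sqrt (intervalIntegral.integral_nonneg (by norm_num) fun θ _ => sq_nonneg _)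
    have h2 : (∫ θ in (0:ℝ)..1, r θ ^ 2) ≤ (1/(N:ℝ))^2 * (∑ i ∈ Finset.range N, u i * v i) := by
      rw [step1, hsum]
      calc (∑ i ∈ Finset.range N, ∫ θ in ((i:ℝ)/N)..(((i:ℝ)+1)/N), (s θ - y θ) * r θ)
          ≤ ∑ i ∈ Finset.range N, |(∫ θ in ((i:ℝ)/N)..(((i:ℝ)+1)/N), (s θ - y θ) * r θ)| :=
            Finset.sum_le_sum fun i _ => le_abs_self _
        _ ≤ ∑ i ∈ Finset.range N, (1/(N:ℝ))^2 * (u i * v i) :=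
            Finset.sum_le_sum fun i hi => hcell i (Finset.mem_range.mp hi)
        _ = (1/(N:ℝ))^2 * (∑ i ∈ Finset.range N, u i * v i) := by rw [Finset.mul_sum]
    have h3 : (∑ i ∈ Finset.range N, u i * v i) ≤ (Real.sqrt (60 * (M:ℝ)^2))^2 * (Y * R) := by
      calc (∑ i ∈ Finset.range N, u i * v i)
          ≤ Real.sqrt (∑ i ∈ Finset.range N, u i ^ 2) *
              Real.sqrt (∑ i ∈ Finset.range N, v i ^ 2) := hcs
        _ = Real.sqrt (∫ θ in (0:ℝ)..1, deriv y θ ^ 2) *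
              Real.sqrt (∫ θ in (0:ℝ)..1, deriv r θ ^ 2) := by rw [husq, hvsq]
        _ ≤ (Real.sqrt (60 * (M:ℝ)^2) * Y) * (Real.sqrt (60 * (M:ℝ)^2) * R) := by
            apply mul_le_mul hinv1 hinv2 (Real.sqrt_nonneg _) (by positivity)
        _ = (Real.sqrt (60 * (M:ℝ)^2))^2 * (Y * R) := by ring
    have hsq60 : (Real.sqrt (60 * (M:ℝ)^2))^2 = 60 * (M:ℝ)^2 := Real.sq_sqrt (by positivity)
    have h4 : (1/(N:ℝ))^2 * (60 * (M:ℝ)^2) = 60 / (K:ℝ)^2 := by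
      have : (N:ℝ) = (K:ℝ) * (M:ℝ) := by rw [hNK]; push_cast; ring
      rw [this]; field_simp
    calc R ^ 2 = ∫ θ in (0:ℝ)..1, r θ ^ 2 := h1
      _ ≤ (1/(N:ℝ))^2 * (∑ i ∈ Finset.range N, u i * v i) := h2
      _ ≤ (1/(N:ℝ))^2 * ((Real.sqrt (60 * (M:ℝ)^2))^2 * (Y * R)) := by
          apply mul_le_mul_of_nonneg_left h3 (by positivity)
      _ = ((1/(N:ℝ))^2 * (60 * (M:ℝ)^2)) * (Y * R) := by rw [hsq60]; ring
      _ = 60 / (K:ℝ)^2 * (Y * R) := by rw [h4]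
  -- conclude
  have goalLHS : Real.sqrt (L2Sq (fun θ => P (stepFun N (NPt N y)) θ - y θ)) = R := rfl
  have goalRHS : Real.sqrt (L2Sq y) = Y := rfl
  rw [goalLHS, goalRHS]
  rcases eq_or_lt_of_le hRnn with h0 | h0
  · rw [← h0]; positivity
  · have := (mul_le_mul_iff_of_pos_right h0).mp (by nlinarith [main] : R * R ≤ (60/(K:ℝ)^2 * Y) * R)
    linarith

-- ### the spline space as a finite dimensional submodule

def splineSub (M : ℕ) : Submodule ℝ (ℝ → ℝ) where
  carrier := {y | IsSpline M y}
  add_mem' := fun {a b} ha hb => ha.add hb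
  zero_mem' := IsSpline.zero M
  smul_mem' := fun c {x} hx => hx.smul c

lemma spline_eval_zero {M : ℕ} (hM : 0 < M) {y : ℝ → ℝ} (hy : IsSpline M y)
    (h0 : ∀ (m : Fin M) (j : Fin 3), y ((m:ℝ)/M + (j:ℝ)/(3*M)) = 0) : y = 0 := by
  have hM' : (0:ℝ) < M := by exact_mod_cast hM
  apply periodic_eq_zero hy.1
  intro t ht
  have htM : 0 ≤ (M:ℝ) * t := mul_nonneg hM'.le ht.1
  have hfl0 : 0 ≤ ⌊(M:ℝ)*t⌋ := Int.floor_nonneg.mpr htM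
  set k : ℕ := ⌊(M:ℝ)*t⌋.toNat with hkdef
  have hkr : (k:ℝ) = (⌊(M:ℝ)*t⌋ : ℝ) := by
    rw [hkdef]; exact_mod_cast congrArg Int.cast (Int.toNat_of_nonneg hfl0)
  have hkM : k < M := by
    have h1 : (M:ℝ)*t < M := by nlinarith [ht.2]
    have h2 : (k:ℝ) ≤ (M:ℝ)*t := by rw [hkr]; exact Int.floor_le _
    exact_mod_cast lt_of_le_of_lt h2 h1
  have hcell : t ∈ Set.Icc ((k:ℝ)/M) (((k:ℝ)+1)/M) := by
    constructor
    · rw [div_le_iff₀ hM']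
      have : (k:ℝ) ≤ (M:ℝ)*t := by rw [hkr]; exact Int.floor_le _
      linarith [this, mul_comm t (M:ℝ)]
    · rw [le_div_iff₀ hM']
      have h3 : (M:ℝ)*t < (⌊(M:ℝ)*t⌋:ℝ)+1 := Int.lt_floor_add_one _
      rw [hkr]
      linarith [mul_comm t (M:ℝ)]
  obtain ⟨a, b, c, hq⟩ := hy.2.2.2 ⟨k, hkM⟩
  have hcast : ((⟨k, hkM⟩ : Fin M) : ℝ) = (k : ℝ) := by norm_cast
  rw [hcast] at hq
  set α := (k:ℝ)/M with hα
  set d := 1/(3*(M:ℝ)) with hd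
  have hdpos : 0 < d := by positivity
  have hmem : ∀ j : ℕ, j ≤ 2 → α + (j:ℝ)*d ∈ Set.Icc ((k:ℝ)/M) (((k:ℝ)+1)/M) := by
    intro j hj
    have hj' : (j:ℝ) ≤ 2 := by exact_mod_cast hj
    constructor
    · have : 0 ≤ (j:ℝ)*d := mul_nonneg (by positivity) hdpos.le
      show (k:ℝ)/M ≤ α + (j:ℝ)*d
      rw [← hα]; linarith
    · show α + (j:ℝ)*d ≤ ((k:ℝ)+1)/M
      have hjd : (j:ℝ)*d ≤ 2*d := by nlinarith
      have h2d : 2*d ≤ 1/(M:ℝ) := by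
        rw [hd, show (2:ℝ)*(1/(3*(M:ℝ))) = 2/(3*M) from by ring,
          div_le_div_iff₀ (by positivity) hM']
        nlinarith
      have he : ((k:ℝ)+1)/M = α + 1/(M:ℝ) := by rw [hα]; field_simp
      rw [he]
      linarith
  have hzero : ∀ j : ℕ, (hj : j ≤ 2) → a*(α + (j:ℝ)*d)^2 + b*(α + (j:ℝ)*d) + c = 0 := by
    intro j hj
    have hjM : j < 3 := by omega
    have hpt := h0 ⟨k, hkM⟩ ⟨j, hjM⟩
    have hcast2 : ((⟨j, hjM⟩ : Fin 3) : ℝ) = (j : ℝ) := by norm_cast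
    rw [hcast, hcast2] at hpt
    have heq : (k:ℝ)/M + (j:ℝ)/(3*M) = α + (j:ℝ)*d := by rw [hα, hd]; ring
    rw [heq] at hpt
    rw [← hq _ (hmem j hj), hpt]
  have e0 := hzero 0 (by norm_num)
  have e1 := hzero 1 (by norm_num)
  have e2 := hzero 2 (by norm_num)
  push_cast at e0 e1 e2
  have ha : a = 0 := by
    have h2 : 2*a*d^2 = 0 := by linear_combination e2 - 2*e1 + e0
    have : a * d^2 = 0 := by linarith
    rcases mul_eq_zero.mp this with h | h
    · exact h
    · exact absurd h (by positivity)
  have hb : b = 0 := by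
    rw [ha] at e0 e1
    have hbd : b*d = 0 := by linear_combination e1 - e0
    rcases mul_eq_zero.mp hbd with h | h
    · exact h
    · exact absurd h (ne_of_gt hdpos)
  have hc : c = 0 := by rw [ha, hb] at e0; linarith
  rw [hq t hcell, ha, hb, hc]
  ring

lemma splineSub_fd (M : ℕ) (hM : 0 < M) : FiniteDimensional ℝ (splineSub M) := by
  · let Φ : splineSub M →ₗ[ℝ] (Fin M × Fin 3 → ℝ) :=
      { toFun := fun y => fun p => (y : ℝ → ℝ) ((p.1:ℝ)/M + (p.2:ℝ)/(3*M))
        map_add' := fun y z => rfl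
        map_smul' := fun c y => rfl }
    apply FiniteDimensional.of_injective Φ
    intro y z h
    rw [← sub_eq_zero]
    have h0 : Φ (y - z) = 0 := by rw [map_sub, h, sub_self]
    have hmem : IsSpline M ((y - z : splineSub M) : ℝ → ℝ) := (y - z).2
    have hz : ((y - z : splineSub M) : ℝ → ℝ) = 0 := by
      apply spline_eval_zero hM hmem
      intro m j
      exact congrFun h0 (m, j)
    exact Subtype.ext hz

-- ### linearity of the composed map

lemma stepNPt_add (N : ℕ) {y z : ℝ → ℝ} (hy : Continuous y) (hz : Continuous z) :
    stepFun N (NPt N (fun θ => y θ + z θ)) =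
      fun θ => stepFun N (NPt N y) θ + stepFun N (NPt N z) θ := by
  funext θ
  unfold stepFun
  split_ifs with h
  · show NPt N (fun θ => y θ + z θ) _ = NPt N y _ + NPt N z _
    simp only [NPt]
    rw [intervalIntegral.integral_add (hy.intervalIntegrable _ _) (hz.intervalIntegrable _ _)]
    ring
  · norm_num

lemma stepNPt_smul (N : ℕ) (c : ℝ) (y : ℝ → ℝ) :
    stepFun N (NPt N (fun θ => c * y θ)) = fun θ => c * stepFun N (NPt N y) θ := by
  funext θ
  unfold stepFun
  split_ifs with h
  · show NPt N (fun θ => c * y θ) _ = c * NPt N y _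
    simp only [NPt]
    rw [intervalIntegral.integral_const_mul]
    ring
  · norm_num

lemma P_add {M : ℕ} {P : (ℝ → ℝ) → ℝ → ℝ} (hP : IsL2Projection M P) (f g : ℝ → ℝ)
    (Hf : ∀ w : ℝ → ℝ, Continuous w →
      IntervalIntegrable (fun θ => f θ * w θ) volume 0 1)
    (Hg : ∀ w : ℝ → ℝ, Continuous w →
      IntervalIntegrable (fun θ => g θ * w θ) volume 0 1) :
    P (fun θ => f θ + g θ) = fun θ => P f θ + P g θ := by
  have hu : IsSpline M (P (fun θ => f θ + g θ)) := (hP _).1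
  have hv : IsSpline M (fun θ => P f θ + P g θ) := ((hP f).1).add ((hP g).1)
  apply proj_unique (f := fun θ => f θ + g θ) hu hv
  · -- integrability of (f+g)•(u - v)
    have hw : Continuous (fun θ => P (fun θ => f θ + g θ) θ - (P f θ + P g θ)) :=
      hu.cont.sub (((hP f).1).cont.add ((hP g).1).cont)
    have : (fun θ => (f θ + g θ) *
        (P (fun θ => f θ + g θ) θ - (fun θ => P f θ + P g θ) θ)) =
        fun θ => f θ * (P (fun θ => f θ + g θ) θ - (P f θ + P g θ)) +
          g θ * (P (fun θ => f θ + g θ) θ - (P f θ + P g θ)) := funext fun θ => by ring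
    rw [this]
    exact (Hf _ hw).add (Hg _ hw)
  · exact (hP _).2
  · intro z hz
    have e : (fun θ => (f θ + g θ - (fun θ => P f θ + P g θ) θ) * z θ) =
        fun θ => (f θ - P f θ) * z θ + (g θ - P g θ) * z θ := funext fun θ => by ring
    have if1 : IntervalIntegrable (fun θ => (f θ - P f θ) * z θ) volume 0 1 := by
      have : (fun θ => (f θ - P f θ) * z θ) =
          fun θ => f θ * z θ - P f θ * z θ := funext fun θ => by ring
      rw [this]
      exact (Hf z hz.cont).sub (((hP f).1.cont.mul hz.cont).intervalIntegrable _ _)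
    have if2 : IntervalIntegrable (fun θ => (g θ - P g θ) * z θ) volume 0 1 := by
      have : (fun θ => (g θ - P g θ) * z θ) =
          fun θ => g θ * z θ - P g θ * z θ := funext fun θ => by ring
      rw [this]
      exact (Hg z hz.cont).sub (((hP g).1.cont.mul hz.cont).intervalIntegrable _ _)
    rw [e, intervalIntegral.integral_add if1 if2, (hP f).2 z hz, (hP g).2 z hz, add_zero]

lemma P_smul {M : ℕ} {P : (ℝ → ℝ) → ℝ → ℝ} (hP : IsL2Projection M P) (c : ℝ) (f : ℝ → ℝ)
    (Hf : ∀ w : ℝ → ℝ, Continuous w →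
      IntervalIntegrable (fun θ => f θ * w θ) volume 0 1) :
    P (fun θ => c * f θ) = fun θ => c * P f θ := by
  have hu : IsSpline M (P (fun θ => c * f θ)) := (hP _).1
  have hv : IsSpline M (fun θ => c * P f θ) := ((hP f).1).smul c
  apply proj_unique (f := fun θ => c * f θ) hu hv
  · have hw : Continuous (fun θ => P (fun θ => c * f θ) θ - c * P f θ) :=
      hu.cont.sub (continuous_const.mul (hP f).1.cont)
    have e : (fun θ => (c * f θ) *
        (P (fun θ => c * f θ) θ - (fun θ => c * P f θ) θ)) =
        fun θ => c * (f θ * (P (fun θ => c * f θ) θ - c * P f θ)) := funext fun θ => by ring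
    rw [e]
    exact (Hf _ hw).const_mul c
  · exact (hP _).2
  · intro z hz
    have e : (fun θ => (c * f θ - (fun θ => c * P f θ) θ) * z θ) =
        fun θ => c * ((f θ - P f θ) * z θ) := funext fun θ => by ring
    rw [e, intervalIntegral.integral_const_mul, (hP f).2 z hz, mul_zero]


/-- **Near-identity property of `P N Pᵗ`** (Lemma 3.6): `‖P N Pᵗ - id_{Y_M}‖ = O(1/K²)`;
in particular `P N Pᵗ : Y_M → Y_M` is invertible for `K` large enough. -/
theorem PNPt_near_identity :
    ∃ C : ℝ, 0 < C ∧ ∃ Kstar : ℕ,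
      ∀ (N M K : ℕ), 0 < M → 0 < K → N = K * M →
      ∀ P : (ℝ → ℝ) → ℝ → ℝ, IsL2Projection M P →
        (∀ y, IsSpline M y →
          Real.sqrt (L2Sq (fun θ => P (stepFun N (NPt N y)) θ - y θ)) ≤
            C / (K : ℝ) ^ 2 * Real.sqrt (L2Sq y)) ∧
        (Kstar ≤ K → ∀ z, IsSpline M z →
          ∃! y : ℝ → ℝ, IsSpline M y ∧ P (stepFun N (NPt N y)) = z) := by
  refine ⟨60, by norm_num, 8, ?_⟩
  intro N M K hM hK hNK P hP
  refine ⟨fun y hy => main_estimate hM hK hNK hP hy, ?_⟩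
  intro hKs z hz
  haveI := splineSub_fd M hM
  have hstep : ∀ y : splineSub M, IsSpline M (P (stepFun N (NPt N (y : ℝ → ℝ)))) :=
    fun y => (hP _).1
  let T : splineSub M →ₗ[ℝ] splineSub M :=
    { toFun := fun y => ⟨P (stepFun N (NPt N (y : ℝ → ℝ))), hstep y⟩
      map_add' := by
        intro y₁ y₂
        apply Subtype.ext
        show P (stepFun N (NPt N ((y₁ + y₂ : splineSub M) : ℝ → ℝ))) = _
        have hc : ((y₁ + y₂ : splineSub M) : ℝ → ℝ) =
            fun θ => (y₁ : ℝ → ℝ) θ + (y₂ : ℝ → ℝ) θ := rfl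
        rw [hc, stepNPt_add N y₁.2.cont y₂.2.cont,
          P_add hP _ _ (fun w hw => stepFun_mul_intervalIntegrable N _ hw 0 1)
            (fun w hw => stepFun_mul_intervalIntegrable N _ hw 0 1)]
        rfl
      map_smul' := by
        intro c y
        apply Subtype.ext
        show P (stepFun N (NPt N ((c • y : splineSub M) : ℝ → ℝ))) = _
        have hc : ((c • y : splineSub M) : ℝ → ℝ) = fun θ => c * (y : ℝ → ℝ) θ := rfl
        rw [hc, stepNPt_smul N c _,
          P_smul hP c _ (fun w hw => stepFun_mul_intervalIntegrable N _ hw 0 1)]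
        rfl }
  have hinj : Function.Injective T := by
    apply (injective_iff_map_eq_zero T).mpr
    intro y hy0
    have hz0 : P (stepFun N (NPt N (y : ℝ → ℝ))) = (0 : ℝ → ℝ) :=
      congrArg Subtype.val hy0
    have est := main_estimate hM hK hNK hP y.2
    have hL2 : L2Sq (fun θ => P (stepFun N (NPt N (y : ℝ → ℝ))) θ - (y : ℝ → ℝ) θ) =
        L2Sq (y : ℝ → ℝ) := by
      unfold L2Sq
      apply intervalIntegral.integral_congr
      intro θ _
      rw [hz0]
      simp only [Pi.zero_apply]
      ring
    rw [hL2] at est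
    have hnn : 0 ≤ L2Sq (y : ℝ → ℝ) :=
      intervalIntegral.integral_nonneg (by norm_num) fun θ _ => sq_nonneg _
    have hKbig : (64:ℝ) ≤ (K:ℝ)^2 := by
      have : (8:ℝ) ≤ (K:ℝ) := by exact_mod_cast hKs
      nlinarith
    have hcoef : 60 / (K:ℝ)^2 < 1 := by
      rw [div_lt_one (by positivity)]
      linarith
    have hsq0 : Real.sqrt (L2Sq (y : ℝ → ℝ)) = 0 := by
      by_contra hne
      have hpos : 0 < Real.sqrt (L2Sq (y : ℝ → ℝ)) :=
        lt_of_le_of_ne (Real.sqrt_nonneg _) (Ne.symm hne)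
      nlinarith
    have hL0 : L2Sq (y : ℝ → ℝ) = 0 := by
      have := Real.sqrt_eq_zero hnn |>.mp hsq0
      exact this
    have : (y : ℝ → ℝ) = 0 := eq_zero_of_L2Sq_eq_zero y.2.cont y.2.1 hL0
    exact Subtype.ext this
  have hsurj : Function.Surjective T := (LinearMap.injective_iff_surjective).mp hinj
  obtain ⟨y, hy⟩ := hsurj ⟨z, hz⟩
  refine ⟨(y : ℝ → ℝ), ⟨y.2, congrArg Subtype.val hy⟩, ?_⟩
  rintro y' ⟨hy'1, hy'2⟩
  have hT : T ⟨y', hy'1⟩ = ⟨z, hz⟩ := Subtype.ext hy'2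
  have := hinj (hT.trans hy.symm)
  exact congrArg Subtype.val this
end
end

section
/- Closeness of the Ā inner product and the H¹ inner product: There exists an integer K* such that for all K ≥ K*, all M, and all y, ỹ ∈ Y_M, | ⟨ỹ, Āy⟩_{L²} − ⟨ỹ, y⟩_{H¹} | ≲ (1/N)( |ỹ|_{H¹} |y|_{H²} + |ỹ|_{H²} |y|_{H¹} ) ≲ (M/N) |ỹ|_{H¹} |y|_{H¹}, with universal implicit constants. -/
open MeasureTheory

noncomputable section

namespace AbarAux

open Set intervalIntegral

lemma hasDerivAt_quad (a b c t : ℝ) :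
    HasDerivAt (fun θ : ℝ => a * θ ^ 2 + b * θ + c) (2 * a * t + b) t := by
  have h1 : HasDerivAt (fun θ : ℝ => θ ^ 2) (2 * t) t := by
    simpa using hasDerivAt_pow 2 t
  have h2 : HasDerivAt (fun θ : ℝ => a * θ ^ 2 + b * θ + c)
      (a * (2 * t) + b * 1) t :=
    ((h1.const_mul a).add ((hasDerivAt_id t).const_mul b)).add_const c
  exact h2.congr_deriv (by ring)

lemma integral_quad (a b c u v : ℝ) :
    (∫ θ in u..v, (a * θ ^ 2 + b * θ + c)) =
      a * (v ^ 3 - u ^ 3) / 3 + b * (v ^ 2 - u ^ 2) / 2 + c * (v - u) := by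
  have h : ∀ θ : ℝ, a * θ ^ 2 + b * θ + c
      = a * θ ^ 2 + (b * θ + c) := by intro θ; ring
  simp only [h]
  rw [intervalIntegral.integral_add, intervalIntegral.integral_add]
  · rw [intervalIntegral.integral_const_mul, intervalIntegral.integral_const_mul,
      integral_pow, integral_id, intervalIntegral.integral_const]
    push_cast
    simp only [smul_eq_mul]
    ring
  · exact (continuous_const.mul continuous_id).intervalIntegrable _ _
  · exact continuous_const.intervalIntegrable _ _
  · exact (continuous_const.mul (continuous_pow 2)).intervalIntegrable _ _
  · exact ((continuous_const.mul continuous_id).add continuous_const).intervalIntegrable _ _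

lemma deriv_periodic {y : ℝ → ℝ} (hy : Function.Periodic y 1) :
    Function.Periodic (deriv y) 1 := by
  intro x
  have h : (fun t : ℝ => y (t + 1)) = y := funext fun t => hy t
  have h2 := deriv_comp_add_const y 1 x
  rw [h] at h2
  exact h2.symm

lemma deriv_rep_of_rep {y : ℝ → ℝ} (hy : ContDiff ℝ 1 y) {a b c u v : ℝ} (huv : u < v)
    (h : ∀ θ ∈ Set.Icc u v, y θ = a * θ ^ 2 + b * θ + c) :
    ∀ θ ∈ Set.Icc u v, deriv y θ = 2 * a * θ + b := by
  have hcont : Continuous (deriv y) := hy.continuous_deriv le_rfl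
  have hIoo : ∀ θ ∈ Set.Ioo u v, deriv y θ = 2 * a * θ + b := by
    intro θ hθ
    have hmem : Set.Icc u v ∈ nhds θ := Icc_mem_nhds hθ.1 hθ.2
    have hev : y =ᶠ[nhds θ] (fun θ => a * θ ^ 2 + b * θ + c) :=
      Filter.eventuallyEq_of_mem hmem h
    rw [hev.deriv_eq]
    exact (hasDerivAt_quad a b c θ).deriv
  have hclos : Set.EqOn (deriv y) (fun θ => 2 * a * θ + b) (closure (Set.Ioo u v)) :=
    Set.EqOn.closure (fun θ hθ => hIoo θ hθ) hcont (by continuity)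
  intro θ hθ
  have : θ ∈ closure (Set.Ioo u v) := by
    rw [closure_Ioo huv.ne]; exact hθ
  exact hclos this


lemma mesh_rep {M : ℕ} (hM : 0 < M) {y : ℝ → ℝ} (hy : IsSpline M y) (m : ℕ) :
    ∃ a b c : ℝ,
      (∀ θ ∈ Set.Icc ((m : ℝ) / M) (((m : ℝ) + 1) / M), y θ = a * θ ^ 2 + b * θ + c) ∧
      (∀ θ ∈ Set.Icc ((m : ℝ) / M) (((m : ℝ) + 1) / M), deriv y θ = 2 * a * θ + b) := by
  have hMpos : (0 : ℝ) < M := by exact_mod_cast hM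
  have hr : m % M < M := Nat.mod_lt _ hM
  obtain ⟨a, b, c, hrep⟩ := hy.2.2.2 ⟨m % M, hr⟩
  have hrep' : ∀ θ ∈ Set.Icc (((m % M : ℕ) : ℝ) / M) ((((m % M : ℕ) : ℝ) + 1) / M),
      y θ = a * θ ^ 2 + b * θ + c := by
    intro θ hθ; exact hrep θ hθ
  have hlt : ((m % M : ℕ) : ℝ) / M < (((m % M : ℕ) : ℝ) + 1) / M := by
    exact (div_lt_div_iff_of_pos_right hMpos).2 (by linarith)
  have hderiv := deriv_rep_of_rep hy.2.1 hlt hrep'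
  set q : ℕ := m / M with hq
  set r : ℕ := m % M with hrdef
  have hcast : (m : ℝ) = M * q + r := by
    conv_lhs => rw [← Nat.div_add_mod m M]
    push_cast; ring
  have hper := hy.1
  have hperd := deriv_periodic hy.1
  refine ⟨a, b - 2 * a * q, a * q ^ 2 - b * q + c, ?_, ?_⟩
  · intro θ hθ
    have hmem : θ - q ∈ Set.Icc ((r : ℝ) / M) (((r : ℝ) + 1) / M) := by
      have h1 := hθ.1
      have h2 := hθ.2
      rw [hcast] at h1 h2
      rw [div_le_iff₀ hMpos] at h1
      rw [le_div_iff₀ hMpos] at h2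
      constructor
      · rw [div_le_iff₀ hMpos]
        nlinarith
      · rw [le_div_iff₀ hMpos]
        nlinarith
    have h1 : y (θ - (q : ℝ) * 1) = y θ := hper.sub_nat_mul_eq q
    rw [mul_one] at h1
    rw [← h1, hrep' _ hmem]
    ring
  · intro θ hθ
    have hmem : θ - q ∈ Set.Icc ((r : ℝ) / M) (((r : ℝ) + 1) / M) := by
      have h1 := hθ.1
      have h2 := hθ.2
      rw [hcast] at h1 h2
      rw [div_le_iff₀ hMpos] at h1
      rw [le_div_iff₀ hMpos] at h2
      constructor
      · rw [div_le_iff₀ hMpos]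
        nlinarith
      · rw [le_div_iff₀ hMpos]
        nlinarith
    have h1 : deriv y (θ - (q : ℝ) * 1) = deriv y θ := hperd.sub_nat_mul_eq q
    rw [mul_one] at h1
    rw [← h1, hderiv _ hmem]
    ring


lemma cell_rep {M K N : ℕ} (hM : 0 < M) (hK : 0 < K) (hN : N = K * M) {y : ℝ → ℝ}
    (hy : IsSpline M y) (i : ℕ) :
    ∃ a b c : ℝ,
      (∀ θ ∈ Set.Icc ((i : ℝ) / N) (((i : ℝ) + 1) / N), y θ = a * θ ^ 2 + b * θ + c) ∧
      (∀ θ ∈ Set.Icc ((i : ℝ) / N) (((i : ℝ) + 1) / N), deriv y θ = 2 * a * θ + b) := by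
  have hMpos : (0 : ℝ) < M := by exact_mod_cast hM
  have hNn : 0 < N := by rw [hN]; exact Nat.mul_pos hK hM
  have hNpos : (0 : ℝ) < N := by exact_mod_cast hNn
  set m : ℕ := i / K with hm
  obtain ⟨a, b, c, hrep, hderiv⟩ := mesh_rep hM hy m
  have h1 : (m * K : ℕ) ≤ i := by
    simpa [hm, mul_comm] using Nat.div_mul_le_self i K
  have h2 : i + 1 ≤ (m + 1) * K := by
    have h3 : i < K * (i / K) + K := by
      conv_lhs => rw [← Nat.div_add_mod i K]
      exact Nat.add_lt_add_left (Nat.mod_lt i hK) _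
    have h4 : (m + 1) * K = K * (i / K) + K := by rw [hm]; ring
    omega
  have key1 : (m : ℝ) / M ≤ (i : ℝ) / N := by
    rw [div_le_div_iff₀ hMpos hNpos, hN]
    have h1' : ((m * K : ℕ) : ℝ) ≤ (i : ℝ) := by exact_mod_cast h1
    push_cast at h1' ⊢
    nlinarith
  have key2 : ((i : ℝ) + 1) / N ≤ ((m : ℝ) + 1) / M := by
    rw [div_le_div_iff₀ hNpos hMpos, hN]
    have h2' : ((i + 1 : ℕ) : ℝ) ≤ (((m + 1) * K : ℕ) : ℝ) := by exact_mod_cast h2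
    push_cast at h2' ⊢
    nlinarith
  have hsub : Set.Icc ((i : ℝ) / N) (((i : ℝ) + 1) / N) ⊆
      Set.Icc ((m : ℝ) / M) (((m : ℝ) + 1) / M) := fun θ hθ =>
    ⟨le_trans key1 hθ.1, le_trans hθ.2 key2⟩
  exact ⟨a, b, c, fun θ hθ => hrep θ (hsub hθ), fun θ hθ => hderiv θ (hsub hθ)⟩

/-- Values of `deriv y` at grid points. -/
noncomputable def Gf (N : ℕ) (y : ℝ → ℝ) (i : ℕ) : ℝ := deriv y ((i : ℝ) / N)

/-- Cell averages times one. -/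
noncomputable def xh (N : ℕ) (y : ℝ → ℝ) (i : ℕ) : ℝ :=
  (N : ℝ) * ∫ θ in ((i : ℝ) / N)..(((i : ℝ) + 1) / N), y θ


lemma Gf_succ (N : ℕ) (y : ℝ → ℝ) (i : ℕ) :
    Gf N y (i + 1) = deriv y (((i : ℝ) + 1) / N) := by
  unfold Gf; congr 2; push_cast; ring

variable {M K N : ℕ} {y yt : ℝ → ℝ}

lemma Npos (hM : 0 < M) (hK : 0 < K) (hN : N = K * M) : (0 : ℝ) < N := by
  have : 0 < N := by rw [hN]; exact Nat.mul_pos hK hM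
  exact_mod_cast this

lemma cell_le (hNpos : (0:ℝ) < N) (i : ℕ) : (i : ℝ) / N ≤ ((i : ℝ) + 1) / N := by
  gcongr
  linarith

lemma xh_eq (hM : 0 < M) (hK : 0 < K) (hN : N = K * M) (hy : IsSpline M y) (i : ℕ) :
    xh N y i = y ((i : ℝ) / N) + (1 / (2 * N)) * Gf N y i
      + (1 / (6 * N)) * (Gf N y (i + 1) - Gf N y i) := by
  have hNpos := Npos hM hK hN
  obtain ⟨a, b, c, hrep, hderiv⟩ := cell_rep hM hK hN hy i
  set u : ℝ := (i : ℝ) / N with hu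
  set v : ℝ := ((i : ℝ) + 1) / N with hv
  have huv : u ≤ v := cell_le hNpos i
  have hint : (∫ θ in u..v, y θ) = ∫ θ in u..v, (a * θ ^ 2 + b * θ + c) :=
    intervalIntegral.integral_congr (fun θ hθ => by
      rw [Set.uIcc_of_le huv] at hθ; exact hrep θ hθ)
  have hG0 : Gf N y i = 2 * a * u + b := hderiv u ⟨le_refl u, huv⟩
  have hG1 : Gf N y (i + 1) = 2 * a * v + b := by
    rw [Gf_succ]; exact hderiv v ⟨huv, le_refl v⟩
  have hY : y u = a * u ^ 2 + b * u + c := hrep u ⟨le_refl u, huv⟩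
  have hvu : v = u + 1 / N := by rw [hu, hv]; field_simp
  unfold xh
  rw [← hu, ← hv, hint, integral_quad, hG0, hG1, hY, hvu]
  field_simp
  ring

lemma yval_diff (hM : 0 < M) (hK : 0 < K) (hN : N = K * M) (hy : IsSpline M y) (i : ℕ) :
    y (((i : ℝ) + 1) / N) - y ((i : ℝ) / N)
      = (1 / (2 * N)) * (Gf N y i + Gf N y (i + 1)) := by
  have hNpos := Npos hM hK hN
  obtain ⟨a, b, c, hrep, hderiv⟩ := cell_rep hM hK hN hy i
  set u : ℝ := (i : ℝ) / N with hu
  set v : ℝ := ((i : ℝ) + 1) / N with hv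
  have huv : u ≤ v := cell_le hNpos i
  have hG0 : Gf N y i = 2 * a * u + b := hderiv u ⟨le_refl u, huv⟩
  have hG1 : Gf N y (i + 1) = 2 * a * v + b := by
    rw [Gf_succ]; exact hderiv v ⟨huv, le_refl v⟩
  have hY0 : y u = a * u ^ 2 + b * u + c := hrep u ⟨le_refl u, huv⟩
  have hY1 : y v = a * v ^ 2 + b * v + c := hrep v ⟨huv, le_refl v⟩
  have hvu : v = u + 1 / N := by rw [hu, hv]; field_simp
  rw [hG0, hG1, hY0, hY1, hvu]
  field_simp
  ring

lemma xh_diff (hM : 0 < M) (hK : 0 < K) (hN : N = K * M) (hy : IsSpline M y) (i : ℕ) :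
    xh N y (i + 1) - xh N y i = (1 / N) * (Gf N y (i + 1)
      + ((Gf N y (i + 2) - Gf N y (i + 1)) - (Gf N y (i + 1) - Gf N y i)) / 6) := by
  have e1 := xh_eq hM hK hN hy i
  have e2 := xh_eq hM hK hN hy (i + 1)
  have e3 := yval_diff hM hK hN hy i
  have hcast : ((i + 1 : ℕ) : ℝ) = (i : ℝ) + 1 := by push_cast; ring
  rw [hcast] at e2
  have hidx : i + 1 + 1 = i + 2 := by omega
  rw [hidx] at e2
  linear_combination e2 - e1 + e3

lemma H1_cell (hM : 0 < M) (hK : 0 < K) (hN : N = K * M) (hyt : IsSpline M yt)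
    (hy : IsSpline M y) (i : ℕ) :
    (∫ θ in ((i : ℝ) / N)..(((i : ℝ) + 1) / N), deriv yt θ * deriv y θ)
      = (1 / (6 * N)) * (2 * Gf N yt i * Gf N y i + Gf N yt i * Gf N y (i + 1)
        + Gf N yt (i + 1) * Gf N y i + 2 * Gf N yt (i + 1) * Gf N y (i + 1)) := by
  have hNpos := Npos hM hK hN
  obtain ⟨a, b, c, hrep, hderiv⟩ := cell_rep hM hK hN hy i
  obtain ⟨a', b', c', hrep', hderiv'⟩ := cell_rep hM hK hN hyt i
  set u : ℝ := (i : ℝ) / N with hu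
  set v : ℝ := ((i : ℝ) + 1) / N with hv
  have huv : u ≤ v := cell_le hNpos i
  have hint : (∫ θ in u..v, deriv yt θ * deriv y θ)
      = ∫ θ in u..v, ((4 * a' * a) * θ ^ 2 + (2 * a' * b + 2 * a * b') * θ + b' * b) :=
    intervalIntegral.integral_congr (fun θ hθ => by
      rw [Set.uIcc_of_le huv] at hθ
      rw [hderiv θ hθ, hderiv' θ hθ]; ring)
  have hG0 : Gf N y i = 2 * a * u + b := hderiv u ⟨le_refl u, huv⟩
  have hG1 : Gf N y (i + 1) = 2 * a * v + b := by
    rw [Gf_succ]; exact hderiv v ⟨huv, le_refl v⟩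
  have hG0' : Gf N yt i = 2 * a' * u + b' := hderiv' u ⟨le_refl u, huv⟩
  have hG1' : Gf N yt (i + 1) = 2 * a' * v + b' := by
    rw [Gf_succ]; exact hderiv' v ⟨huv, le_refl v⟩
  have hvu : v = u + 1 / N := by rw [hu, hv]; field_simp
  rw [hint, integral_quad, hG0, hG1, hG0', hG1', hvu]
  field_simp
  ring

lemma H2_cell (hM : 0 < M) (hK : 0 < K) (hN : N = K * M) (hy : IsSpline M y) (i : ℕ) :
    (∫ θ in ((i : ℝ) / N)..(((i : ℝ) + 1) / N), (deriv (deriv y) θ) ^ 2)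
      = N * (Gf N y (i + 1) - Gf N y i) ^ 2 := by
  have hNpos := Npos hM hK hN
  obtain ⟨a, b, c, hrep, hderiv⟩ := cell_rep hM hK hN hy i
  set u : ℝ := (i : ℝ) / N with hu
  set v : ℝ := ((i : ℝ) + 1) / N with hv
  have huv : u ≤ v := cell_le hNpos i
  have huv' : u < v := by
    rw [hu, hv]
    exact (div_lt_div_iff_of_pos_right hNpos).2 (by linarith)
  have hIoo : ∀ θ ∈ Set.Ioo u v, deriv (deriv y) θ = 2 * a := by
    intro θ hθ
    have hmem : Set.Icc u v ∈ nhds θ := Icc_mem_nhds hθ.1 hθ.2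
    have hev : deriv y =ᶠ[nhds θ] (fun θ => 2 * a * θ + b) :=
      Filter.eventuallyEq_of_mem hmem hderiv
    rw [hev.deriv_eq]
    have : HasDerivAt (fun θ : ℝ => 2 * a * θ + b) (2 * a * 1) θ :=
      ((hasDerivAt_id θ).const_mul (2 * a)).add_const b
    simpa using this.deriv
  have hae : ∀ᵐ θ ∂(MeasureTheory.volume : MeasureTheory.Measure ℝ),
      θ ∈ Set.uIoc u v → (deriv (deriv y) θ) ^ 2 = (2 * a) ^ 2 := by
    have hsub : {θ : ℝ | ¬(θ ∈ Set.uIoc u v → (deriv (deriv y) θ) ^ 2 = (2 * a) ^ 2)}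
        ⊆ {v} := by
      intro θ hθ
      simp only [Set.mem_setOf_eq, _root_.not_imp] at hθ
      obtain ⟨hmem, hne⟩ := hθ
      rw [Set.uIoc_of_le huv] at hmem
      by_contra hne2
      have hlt : θ < v := lt_of_le_of_ne hmem.2 (by simpa using hne2)
      exact hne (by rw [hIoo θ ⟨hmem.1, hlt⟩])
    exact MeasureTheory.ae_iff.2
      (MeasureTheory.measure_mono_null hsub (MeasureTheory.measure_singleton v))
  have hint : (∫ θ in u..v, (deriv (deriv y) θ) ^ 2) = ∫ _ in u..v, ((2 * a) ^ 2 : ℝ) :=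
    intervalIntegral.integral_congr_ae hae
  have hG0 : Gf N y i = 2 * a * u + b := hderiv u ⟨le_refl u, huv⟩
  have hG1 : Gf N y (i + 1) = 2 * a * v + b := by
    rw [Gf_succ]; exact hderiv v ⟨huv, le_refl v⟩
  have hvu : v = u + 1 / N := by rw [hu, hv]; field_simp
  rw [hint, intervalIntegral.integral_const, hG0, hG1, hvu]
  simp only [smul_eq_mul]
  field_simp
  ring


lemma sum_shift {N : ℕ} {f : ℕ → ℝ} (hf : f N = f 0) :
    (∑ i ∈ Finset.range N, f (i + 1)) = ∑ i ∈ Finset.range N, f i := by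
  have h1 := Finset.sum_range_succ' f N
  have h2 := Finset.sum_range_succ f N
  rw [h1] at h2
  rw [hf] at h2
  linarith

lemma periodic_mod {N : ℕ} {f : ℕ → ℝ} (hf : ∀ j, f (j + N) = f j) (k : ℕ) :
    f (k % N) = f k := by
  have key : ∀ q r, f (r + N * q) = f r := by
    intro q
    induction q with
    | zero => intro r; simp
    | succ q ih =>
      intro r
      have h : r + N * (q + 1) = r + N * q + N := by ring
      rw [h, hf, ih]
  conv_rhs => rw [← Nat.mod_add_div k N]
  exact (key (k / N) (k % N)).symm

lemma Gf_periodic (hM : 0 < M) (hK : 0 < K) (hN : N = K * M) (hy : IsSpline M y) (i : ℕ) :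
    Gf N y (i + N) = Gf N y i := by
  have hNpos := Npos hM hK hN
  have hperd := deriv_periodic hy.1
  have harg : ((i + N : ℕ) : ℝ) / N = (i : ℝ) / N + 1 := by
    push_cast; field_simp
  unfold Gf
  rw [harg]
  exact hperd _

lemma xh_periodic (hM : 0 < M) (hK : 0 < K) (hN : N = K * M) (hy : IsSpline M y) (i : ℕ) :
    xh N y (i + N) = xh N y i := by
  have hNpos := Npos hM hK hN
  have harg1 : ((i + N : ℕ) : ℝ) / N = (i : ℝ) / N + 1 := by push_cast; field_simp
  have harg2 : (((i + N : ℕ) : ℝ) + 1) / N = ((i : ℝ) + 1) / N + 1 := by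
    push_cast; field_simp; ring
  unfold xh
  rw [harg1, harg2]
  have hcomp := intervalIntegral.integral_comp_add_right (a := (i : ℝ) / N)
    (b := ((i : ℝ) + 1) / N) (f := y) 1
  have hyper : (fun θ : ℝ => y (θ + 1)) = y := funext fun θ => hy.1 θ
  rw [hyper] at hcomp
  rw [← hcomp]

lemma ae_imp_of_subset_singleton {p : ℝ → Prop} {s : Set ℝ} {v : ℝ}
    (h : {θ : ℝ | ¬(θ ∈ s → p θ)} ⊆ {v}) :
    ∀ᵐ θ ∂(MeasureTheory.volume : MeasureTheory.Measure ℝ), θ ∈ s → p θ :=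
  MeasureTheory.ae_iff.2
    (MeasureTheory.measure_mono_null h (MeasureTheory.measure_singleton v))

lemma step_cell (hNn : 0 < N) (x : EuclideanSpace ℝ (Fin N)) {i : ℕ} (hi : i < N) {θ : ℝ}
    (hθ : θ ∈ Set.Ico ((i : ℝ) / N) (((i : ℝ) + 1) / N)) :
    stepFun N x θ = x ⟨i, hi⟩ := by
  have hNpos : (0 : ℝ) < N := by exact_mod_cast hNn
  have h1 : (i : ℝ) ≤ (N : ℝ) * θ := by
    have := (div_le_iff₀ hNpos).1 hθ.1
    linarith [this]
  have h2 : (N : ℝ) * θ < (i : ℝ) + 1 := by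
    have := (lt_div_iff₀ hNpos).1 hθ.2
    linarith [this]
  have hfl : ⌊(N : ℝ) * θ⌋ = (i : ℤ) := by
    rw [Int.floor_eq_iff]
    constructor
    · push_cast; linarith
    · push_cast; linarith
  simp only [stepFun, dif_pos hNn]
  refine congrArg x.ofLp ?_
  apply Fin.ext
  simp [hfl, Nat.mod_eq_of_lt hi]

lemma step_integrable (hNn : 0 < N) (hcont : Continuous yt)
    (x : EuclideanSpace ℝ (Fin N)) {i : ℕ} (hi : i < N) :
    IntervalIntegrable (fun θ => yt θ * stepFun N x θ) MeasureTheory.volume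
      ((i : ℝ) / N) (((i : ℝ) + 1) / N) ∧
    (∫ θ in ((i : ℝ) / N)..(((i : ℝ) + 1) / N), yt θ * stepFun N x θ)
      = x ⟨i, hi⟩ * ∫ θ in ((i : ℝ) / N)..(((i : ℝ) + 1) / N), yt θ := by
  have hNpos : (0 : ℝ) < N := by exact_mod_cast hNn
  set u : ℝ := (i : ℝ) / N with hu
  set v : ℝ := ((i : ℝ) + 1) / N with hv
  have huv : u ≤ v := cell_le hNpos i
  have hae : ∀ᵐ θ ∂(MeasureTheory.volume : MeasureTheory.Measure ℝ),
      θ ∈ Set.uIoc u v → yt θ * stepFun N x θ = yt θ * x ⟨i, hi⟩ := by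
    apply ae_imp_of_subset_singleton (v := v)
    intro θ hθ
    simp only [Set.mem_setOf_eq, _root_.not_imp] at hθ
    obtain ⟨hmem, hne⟩ := hθ
    rw [Set.uIoc_of_le huv] at hmem
    by_contra hne2
    have hlt : θ < v := lt_of_le_of_ne hmem.2 (by simpa using hne2)
    exact hne (by rw [step_cell hNn x hi ⟨le_of_lt hmem.1, hlt⟩])
  have hg : IntervalIntegrable (fun θ => yt θ * x ⟨i, hi⟩) MeasureTheory.volume u v :=
    (hcont.mul continuous_const).intervalIntegrable _ _
  have haerestrict : (fun θ => yt θ * x ⟨i, hi⟩)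
      =ᵐ[MeasureTheory.volume.restrict (Set.uIoc u v)]
      (fun θ => yt θ * stepFun N x θ) := by
    have := (MeasureTheory.ae_restrict_iff' measurableSet_uIoc).2 hae
    exact (this.mono fun θ h => h.symm).symm.symm
  constructor
  · exact hg.congr_ae haerestrict
  · rw [intervalIntegral.integral_congr_ae hae]
    rw [intervalIntegral.integral_mul_const]
    ring


lemma cast_succ_div (N : ℕ) (i : ℕ) : ((i + 1 : ℕ) : ℝ) / N = ((i : ℝ) + 1) / N := by
  push_cast; ring

lemma split01 {f : ℝ → ℝ} (hNn : 0 < N)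
    (hint : ∀ i < N, IntervalIntegrable f MeasureTheory.volume
      ((i : ℝ) / N) (((i : ℝ) + 1) / N)) :
    (∫ θ in (0:ℝ)..1, f θ)
      = ∑ i ∈ Finset.range N, ∫ θ in ((i : ℝ) / N)..(((i : ℝ) + 1) / N), f θ := by
  have hNpos : (0 : ℝ) < N := by exact_mod_cast hNn
  have key := intervalIntegral.sum_integral_adjacent_intervals
    (a := fun k : ℕ => (k : ℝ) / N) (n := N) (f := f) (μ := MeasureTheory.volume) ?_
  · rw [show ((0 : ℕ) : ℝ) / N = 0 by simp, show ((N : ℕ) : ℝ) / N = 1 by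
      field_simp] at key
    rw [← key]
    exact Finset.sum_congr rfl fun i _ => by rw [cast_succ_div]
  · intro k hk
    show IntervalIntegrable f MeasureTheory.volume ((k : ℝ) / N) (((k + 1 : ℕ) : ℝ) / N)
    rw [cast_succ_div]
    exact hint k hk

lemma intervalIntegrable_adjacent {f : ℝ → ℝ} (hNn : 0 < N)
    (h : ∀ i < N, IntervalIntegrable f MeasureTheory.volume
      ((i : ℝ) / N) (((i : ℝ) + 1) / N)) :
    IntervalIntegrable f MeasureTheory.volume 0 1 := by
  have hNpos : (0 : ℝ) < N := by exact_mod_cast hNn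
  have key : ∀ n, n ≤ N → IntervalIntegrable f MeasureTheory.volume 0 ((n : ℝ) / N) := by
    intro n
    induction n with
    | zero => intro _; simp [IntervalIntegrable.refl]
    | succ n ih =>
      intro hn
      have h1 := ih (le_of_lt (Nat.lt_of_succ_le hn))
      have h2 := h n (Nat.lt_of_succ_le hn)
      rw [cast_succ_div]
      exact h1.trans h2
  have := key N le_rfl
  rwa [show ((N : ℕ) : ℝ) / N = 1 by field_simp] at this

lemma NPt_xh (hj : 0 < N) (j : Fin N) : NPt N y j = xh N y (j : ℕ) := by
  simp [NPt, xh]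

lemma mulVec_eq (hM : 0 < M) (hK : 0 < K) (hN : N = K * M) (hy : IsSpline M y)
    {i : ℕ} (hi : i < N) :
    (Amat N).mulVec (fun j => NPt N y j) ⟨i, hi⟩
      = (N : ℝ) ^ 2 * (2 * xh N y i - xh N y (i + 1) - xh N y (i + (N - 1))) := by
  have hNn : 0 < N := lt_of_le_of_lt (Nat.zero_le i) hi
  have hper := xh_periodic hM hK hN hy
  set v : Fin N → ℝ := fun j => NPt N y j with hv
  have hvx : ∀ j : Fin N, v j = xh N y (j : ℕ) := fun j => NPt_xh hNn j
  set j1 : Fin N := ⟨(i + 1) % N, Nat.mod_lt _ hNn⟩ with hj1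
  set j0 : Fin N := ⟨(i + (N - 1)) % N, Nat.mod_lt _ hNn⟩ with hj0
  have hsplit : (Amat N).mulVec v ⟨i, hi⟩
      = (N : ℝ) ^ 2 * ((∑ j : Fin N, (if (⟨i, hi⟩ : Fin N) = j then (2:ℝ) else 0) * v j)
        + (∑ j : Fin N, (if (i + 1) % N = (j : ℕ) then (-1:ℝ) else 0) * v j)
        + (∑ j : Fin N, (if ((j : ℕ) + 1) % N = i then (-1:ℝ) else 0) * v j)) := by
    simp only [Matrix.mulVec, dotProduct, Amat]
    rw [← Finset.sum_add_distrib, ← Finset.sum_add_distrib, Finset.mul_sum]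
    exact Finset.sum_congr rfl fun j _ => by ring
  rw [hsplit]
  have e1 : (∑ j : Fin N, (if (⟨i, hi⟩ : Fin N) = j then (2:ℝ) else 0) * v j)
      = 2 * xh N y i := by
    rw [Finset.sum_eq_single (⟨i, hi⟩ : Fin N)]
    · simp [hvx]
    · intro j _ hj; simp [Ne.symm hj]
    · intro h; exact absurd (Finset.mem_univ _) h
  have e2 : (∑ j : Fin N, (if (i + 1) % N = (j : ℕ) then (-1:ℝ) else 0) * v j)
      = -xh N y (i + 1) := by
    rw [Finset.sum_eq_single j1]
    · rw [if_pos rfl, hvx]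
      have : xh N y ((i + 1) % N) = xh N y (i + 1) := periodic_mod hper (i + 1)
      rw [hj1]
      simp only []
      rw [this]; ring
    · intro j _ hj
      rw [if_neg, zero_mul]
      intro hc
      exact hj (Fin.ext hc.symm)
    · intro h; exact absurd (Finset.mem_univ _) h
  have e3 : (∑ j : Fin N, (if ((j : ℕ) + 1) % N = i then (-1:ℝ) else 0) * v j)
      = -xh N y (i + (N - 1)) := by
    rw [Finset.sum_eq_single j0]
    · rw [if_pos, hvx]
      · have : xh N y ((i + (N - 1)) % N) = xh N y (i + (N - 1)) :=
          periodic_mod hper (i + (N - 1))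
        rw [hj0]
        simp only []
        rw [this]; ring
      · show ((i + (N - 1)) % N + 1) % N = i
        rw [Nat.mod_add_mod]
        have : i + (N - 1) + 1 = i + N := by omega
        rw [this, Nat.add_mod_right, Nat.mod_eq_of_lt hi]
    · intro j _ hj
      rw [if_neg, zero_mul]
      intro hc
      apply hj
      apply Fin.ext
      show (j : ℕ) = (i + (N - 1)) % N
      rw [← hc, Nat.mod_add_mod]
      have : (j : ℕ) + 1 + (N - 1) = (j : ℕ) + N := by omega
      rw [this, Nat.add_mod_right, Nat.mod_eq_of_lt j.isLt]
    · intro h; exact absurd (Finset.mem_univ _) h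
  rw [e1, e2, e3]
  ring


lemma L2Inner_proj {P : (ℝ → ℝ) → ℝ → ℝ} (hP : IsL2Projection M P) (hyt : IsSpline M yt)
    (f : ℝ → ℝ)
    (hint : IntervalIntegrable (fun θ => yt θ * f θ) MeasureTheory.volume 0 1) :
    L2Inner yt (P f) = ∫ θ in (0:ℝ)..1, yt θ * f θ := by
  obtain ⟨hPf, horth⟩ := hP f
  have h0 := horth yt hyt
  have hcont1 : Continuous yt := hyt.2.1.continuous
  have hcont2 : Continuous (P f) := hPf.2.1.continuous
  have h1 : IntervalIntegrable (fun θ => yt θ * P f θ) MeasureTheory.volume 0 1 :=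
    (hcont1.mul hcont2).intervalIntegrable _ _
  have h2 : (∫ θ in (0:ℝ)..1, (f θ - P f θ) * yt θ)
      = (∫ θ in (0:ℝ)..1, yt θ * f θ) - ∫ θ in (0:ℝ)..1, yt θ * P f θ := by
    rw [← intervalIntegral.integral_sub hint h1]
    exact intervalIntegral.integral_congr fun θ _ => by ring
  rw [h0] at h2
  unfold L2Inner
  linarith

lemma V_formula {P : (ℝ → ℝ) → ℝ → ℝ} (hM : 0 < M) (hK : 0 < K) (hN : N = K * M)
    (hP : IsL2Projection M P) (hy : IsSpline M y) (hyt : IsSpline M yt) :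
    L2Inner yt (Abar N P y)
      = (N : ℝ) * ∑ i ∈ Finset.range N,
          (xh N yt (i + 1) - xh N yt i) * (xh N y (i + 1) - xh N y i) := by
  have hNn : 0 < N := by rw [hN]; exact Nat.mul_pos hK hM
  have hNpos : (0 : ℝ) < N := by exact_mod_cast hNn
  have hN0 : (N : ℝ) ≠ 0 := ne_of_gt hNpos
  have hcontyt : Continuous yt := hyt.2.1.continuous
  set w : EuclideanSpace ℝ (Fin N) := WithLp.toLp 2 ((Amat N).mulVec (fun j => NPt N y j)) with hw
  have hintcell : ∀ i < N, IntervalIntegrable (fun θ => yt θ * stepFun N w θ)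
      MeasureTheory.volume ((i : ℝ) / N) (((i : ℝ) + 1) / N) :=
    fun i hi => (step_integrable hNn hcontyt w hi).1
  have hV : L2Inner yt (Abar N P y) = ∫ θ in (0:ℝ)..1, yt θ * stepFun N w θ :=
    L2Inner_proj hP hyt _ (intervalIntegrable_adjacent hNn hintcell)
  rw [hV, split01 hNn hintcell]
  have hstep : ∀ i ∈ Finset.range N,
      (∫ θ in ((i : ℝ) / N)..(((i : ℝ) + 1) / N), yt θ * stepFun N w θ)
      = (N : ℝ) ^ 2 * (2 * xh N y i - xh N y (i + 1) - xh N y (i + (N - 1)))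
          * (xh N yt i / N) := by
    intro i hi
    have hi' := Finset.mem_range.1 hi
    rw [(step_integrable hNn hcontyt w hi').2]
    have hval : (∫ θ in ((i : ℝ) / N)..(((i : ℝ) + 1) / N), yt θ) = xh N yt i / N := by
      unfold xh; field_simp
    rw [hval, hw, WithLp.ofLp_toLp]
    rw [mulVec_eq hM hK hN hy hi']
  rw [Finset.sum_congr rfl hstep]
  have hpg : ∀ j, xh N y (j + N) = xh N y j := xh_periodic hM hK hN hy
  have hpgt : ∀ j, xh N yt (j + N) = xh N yt j := xh_periodic hM hK hN hyt
  set g : ℕ → ℝ := xh N y with hgdef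
  set gt : ℕ → ℝ := xh N yt with hgtdef
  have hgN : g N = g 0 := by simpa using hpg 0
  have hgN1 : g (N + 1) = g 1 := by
    have := hpg 1; rwa [show 1 + N = N + 1 by omega] at this
  have hgNN : g (N + (N - 1)) = g (N - 1) := by
    have := hpg (N - 1); rwa [show (N - 1) + N = N + (N - 1) by omega] at this
  have hgtN : gt N = gt 0 := by simpa using hpgt 0
  set t : ℕ → ℝ := fun i =>
    (N : ℝ) ^ 2 * (2 * g i - g (i + 1) - g (i + (N - 1))) * (gt i / N) with ht
  have hshift : (∑ i ∈ Finset.range N, t i) = ∑ i ∈ Finset.range N, t (i + 1) := by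
    refine (sum_shift ?_).symm
    show (N : ℝ) ^ 2 * (2 * g N - g (N + 1) - g (N + (N - 1))) * (gt N / N)
      = (N : ℝ) ^ 2 * (2 * g 0 - g (0 + 1) - g (0 + (N - 1))) * (gt 0 / N)
    rw [hgN, hgN1, hgNN, hgtN, show (0 : ℕ) + 1 = 1 by omega,
      show (0 : ℕ) + (N - 1) = N - 1 by omega]
  rw [hshift]
  have hstep2 : ∀ i ∈ Finset.range N,
      t (i + 1) = (N : ℝ) ^ 2 * (2 * g (i + 1) - g (i + 2) - g i) * (gt (i + 1) / N) := by
    intro i _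
    show (N : ℝ) ^ 2 * (2 * g (i + 1) - g (i + 1 + 1) - g (i + 1 + (N - 1))) * (gt (i + 1) / N)
      = _
    rw [show i + 1 + 1 = i + 2 by omega, show i + 1 + (N - 1) = i + N by omega, hpg i]
  rw [Finset.sum_congr rfl hstep2]
  set φ : ℕ → ℝ := fun i => (N : ℝ) * (gt i * g i - gt i * g (i + 1)) with hφ
  have htel : ∀ i ∈ Finset.range N,
      (N : ℝ) ^ 2 * (2 * g (i + 1) - g (i + 2) - g i) * (gt (i + 1) / N)
        = (N : ℝ) * ((gt (i + 1) - gt i) * (g (i + 1) - g i)) + (φ (i + 1) - φ i) := by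
    intro i _
    show (N : ℝ) ^ 2 * (2 * g (i + 1) - g (i + 2) - g i) * (gt (i + 1) / N)
      = (N : ℝ) * ((gt (i + 1) - gt i) * (g (i + 1) - g i))
        + ((N : ℝ) * (gt (i + 1) * g (i + 1) - gt (i + 1) * g (i + 1 + 1))
          - (N : ℝ) * (gt i * g i - gt i * g (i + 1)))
    rw [show i + 1 + 1 = i + 2 by omega]
    field_simp
    ring
  rw [Finset.sum_congr rfl htel, Finset.sum_add_distrib, Finset.sum_range_sub φ N]
  have hφN : φ N = φ 0 := by
    show (N : ℝ) * (gt N * g N - gt N * g (N + 1))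
      = (N : ℝ) * (gt 0 * g 0 - gt 0 * g (0 + 1))
    rw [hgN, hgN1, hgtN, show (0 : ℕ) + 1 = 1 by omega]
  rw [hφN, sub_self, add_zero, Finset.mul_sum]


lemma H1Inner_formula (hM : 0 < M) (hK : 0 < K) (hN : N = K * M)
    (hyt : IsSpline M yt) (hy : IsSpline M y) :
    H1Inner yt y = ∑ i ∈ Finset.range N,
      (1 / (6 * (N : ℝ))) * (2 * Gf N yt i * Gf N y i + Gf N yt i * Gf N y (i + 1)
        + Gf N yt (i + 1) * Gf N y i + 2 * Gf N yt (i + 1) * Gf N y (i + 1)) := by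
  have hNn : 0 < N := by rw [hN]; exact Nat.mul_pos hK hM
  have hcont : Continuous (fun θ => deriv yt θ * deriv y θ) :=
    (hyt.2.1.continuous_deriv le_rfl).mul (hy.2.1.continuous_deriv le_rfl)
  unfold H1Inner
  rw [split01 hNn (fun i _ => hcont.intervalIntegrable _ _)]
  exact Finset.sum_congr rfl fun i _ => H1_cell hM hK hN hyt hy i

lemma H1Sq_eq (y : ℝ → ℝ) : H1Sq y = H1Inner y y := by
  unfold H1Sq H1Inner
  exact intervalIntegral.integral_congr fun θ _ => by ring

lemma H2_cell_integrable (hM : 0 < M) (hK : 0 < K) (hN : N = K * M) (hy : IsSpline M y)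
    (i : ℕ) :
    IntervalIntegrable (fun θ => (deriv (deriv y) θ) ^ 2) MeasureTheory.volume
      ((i : ℝ) / N) (((i : ℝ) + 1) / N) := by
  have hNpos := Npos hM hK hN
  obtain ⟨a, b, c, hrep, hderiv⟩ := cell_rep hM hK hN hy i
  set u : ℝ := (i : ℝ) / N with hu
  set v : ℝ := ((i : ℝ) + 1) / N with hv
  have huv : u ≤ v := cell_le hNpos i
  have hIoo : ∀ θ ∈ Set.Ioo u v, deriv (deriv y) θ = 2 * a := by
    intro θ hθ
    have hmem : Set.Icc u v ∈ nhds θ := Icc_mem_nhds hθ.1 hθ.2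
    have hev : deriv y =ᶠ[nhds θ] (fun θ => 2 * a * θ + b) :=
      Filter.eventuallyEq_of_mem hmem hderiv
    rw [hev.deriv_eq]
    have : HasDerivAt (fun θ : ℝ => 2 * a * θ + b) (2 * a * 1) θ :=
      ((hasDerivAt_id θ).const_mul (2 * a)).add_const b
    simpa using this.deriv
  have hae : ∀ᵐ θ ∂(MeasureTheory.volume : MeasureTheory.Measure ℝ),
      θ ∈ Set.uIoc u v → ((2 * a : ℝ)) ^ 2 = (deriv (deriv y) θ) ^ 2 := by
    apply ae_imp_of_subset_singleton (v := v)
    intro θ hθ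
    simp only [Set.mem_setOf_eq, _root_.not_imp] at hθ
    obtain ⟨hmem, hne⟩ := hθ
    rw [Set.uIoc_of_le huv] at hmem
    by_contra hne2
    have hlt : θ < v := lt_of_le_of_ne hmem.2 (by simpa using hne2)
    exact hne (by rw [hIoo θ ⟨hmem.1, hlt⟩])
  have hg : IntervalIntegrable (fun _ : ℝ => ((2 * a : ℝ)) ^ 2) MeasureTheory.volume u v :=
    intervalIntegrable_const
  exact hg.congr_ae ((MeasureTheory.ae_restrict_iff' measurableSet_uIoc).2 hae)

lemma H2Sq_formula (hM : 0 < M) (hK : 0 < K) (hN : N = K * M) (hy : IsSpline M y) :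
    H2Sq y = ∑ i ∈ Finset.range N, (N : ℝ) * (Gf N y (i + 1) - Gf N y i) ^ 2 := by
  have hNn : 0 < N := by rw [hN]; exact Nat.mul_pos hK hM
  unfold H2Sq
  rw [split01 hNn (fun i _ => H2_cell_integrable hM hK hN hy i)]
  exact Finset.sum_congr rfl fun i _ => H2_cell hM hK hN hy i

lemma E_formula {P : (ℝ → ℝ) → ℝ → ℝ} (hM : 0 < M) (hK : 0 < K) (hN : N = K * M)
    (hP : IsL2Projection M P) (hy : IsSpline M y) (hyt : IsSpline M yt) :
    L2Inner yt (Abar N P y) - H1Inner yt y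
      = ∑ i ∈ Finset.range N,
          (-(1 / (6 * (N : ℝ))) * ((Gf N yt (i + 1) - Gf N yt i) * (Gf N y (i + 1) - Gf N y i))
            + (1 / (36 * (N : ℝ)))
              * (((Gf N yt (i + 2) - Gf N yt (i + 1)) - (Gf N yt (i + 1) - Gf N yt i))
                * ((Gf N y (i + 2) - Gf N y (i + 1)) - (Gf N y (i + 1) - Gf N y i)))) := by
  have hNn : 0 < N := by rw [hN]; exact Nat.mul_pos hK hM
  have hNpos : (0 : ℝ) < N := by exact_mod_cast hNn
  have hN0 : (N : ℝ) ≠ 0 := ne_of_gt hNpos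
  rw [V_formula hM hK hN hP hy hyt, H1Inner_formula hM hK hN hyt hy]
  set G : ℕ → ℝ := Gf N y with hG
  set Gt : ℕ → ℝ := Gf N yt with hGt
  have hdx : ∀ i : ℕ, xh N y (i + 1) - xh N y i
      = (1 / (N : ℝ)) * (G (i + 1) + ((G (i + 2) - G (i + 1)) - (G (i + 1) - G i)) / 6) :=
    fun i => xh_diff hM hK hN hy i
  have hdxt : ∀ i : ℕ, xh N yt (i + 1) - xh N yt i
      = (1 / (N : ℝ)) * (Gt (i + 1) + ((Gt (i + 2) - Gt (i + 1)) - (Gt (i + 1) - Gt i)) / 6) :=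
    fun i => xh_diff hM hK hN hyt i
  have hpG : ∀ j, G (j + N) = G j := Gf_periodic hM hK hN hy
  have hpGt : ∀ j, Gt (j + N) = Gt j := Gf_periodic hM hK hN hyt
  set φ : ℕ → ℝ := fun i => (1 / (N : ℝ)) * ((1/2) * Gt i * G i
    + (1/6) * Gt i * (G (i + 1) - G i) + (1/6) * (Gt (i + 1) - Gt i) * G i) with hφ
  have htel : ∀ i ∈ Finset.range N,
      (N : ℝ) * ((xh N yt (i + 1) - xh N yt i) * (xh N y (i + 1) - xh N y i))
        - (1 / (6 * (N : ℝ))) * (2 * Gt i * G i + Gt i * G (i + 1)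
            + Gt (i + 1) * G i + 2 * Gt (i + 1) * G (i + 1))
      = (-(1 / (6 * (N : ℝ))) * ((Gt (i + 1) - Gt i) * (G (i + 1) - G i))
          + (1 / (36 * (N : ℝ)))
            * (((Gt (i + 2) - Gt (i + 1)) - (Gt (i + 1) - Gt i))
              * ((G (i + 2) - G (i + 1)) - (G (i + 1) - G i))))
        + (φ (i + 1) - φ i) := by
    intro i _
    rw [hdx i, hdxt i]
    show _ = _ + ((1 / (N : ℝ)) * ((1/2) * Gt (i+1) * G (i+1)
      + (1/6) * Gt (i+1) * (G (i+1+1) - G (i+1)) + (1/6) * (Gt (i+1+1) - Gt (i+1)) * G (i+1))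
      - (1 / (N : ℝ)) * ((1/2) * Gt i * G i
      + (1/6) * Gt i * (G (i + 1) - G i) + (1/6) * (Gt (i + 1) - Gt i) * G i))
    rw [show i + 1 + 1 = i + 2 by omega]
    field_simp
    ring
  have hmul : (N : ℝ) * ∑ i ∈ Finset.range N,
        (xh N yt (i + 1) - xh N yt i) * (xh N y (i + 1) - xh N y i)
      = ∑ i ∈ Finset.range N,
        (N : ℝ) * ((xh N yt (i + 1) - xh N yt i) * (xh N y (i + 1) - xh N y i)) :=
    Finset.mul_sum _ _ _
  rw [hmul, ← Finset.sum_sub_distrib, Finset.sum_congr rfl htel, Finset.sum_add_distrib,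
    Finset.sum_range_sub φ N]
  have hφN : φ N = φ 0 := by
    show (1 / (N : ℝ)) * ((1/2) * Gt N * G N
      + (1/6) * Gt N * (G (N + 1) - G N) + (1/6) * (Gt (N + 1) - Gt N) * G N)
      = (1 / (N : ℝ)) * ((1/2) * Gt 0 * G 0
      + (1/6) * Gt 0 * (G (0 + 1) - G 0) + (1/6) * (Gt (0 + 1) - Gt 0) * G 0)
    have h1 : G N = G 0 := by simpa using hpG 0
    have h2 : G (N + 1) = G 1 := by
      have := hpG 1; rwa [show 1 + N = N + 1 by omega] at this
    have h3 : Gt N = Gt 0 := by simpa using hpGt 0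
    have h4 : Gt (N + 1) = Gt 1 := by
      have := hpGt 1; rwa [show 1 + N = N + 1 by omega] at this
    rw [h1, h2, h3, h4, show (0 : ℕ) + 1 = 1 by omega]
  rw [hφN, sub_self, add_zero]


lemma abs_sum_mul_le (s : Finset ℕ) (f g : ℕ → ℝ) :
    |∑ i ∈ s, f i * g i|
      ≤ Real.sqrt (∑ i ∈ s, f i ^ 2) * Real.sqrt (∑ i ∈ s, g i ^ 2) := by
  have h := Finset.sum_mul_sq_le_sq_mul_sq s f g
  have h2 := Real.sqrt_le_sqrt h
  rwa [Real.sqrt_sq_eq_abs, Real.sqrt_mul (Finset.sum_nonneg fun i _ => sq_nonneg _)] at h2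

lemma E_bound {P : (ℝ → ℝ) → ℝ → ℝ} (hM : 0 < M) (hK : 0 < K) (hN : N = K * M)
    (hP : IsL2Projection M P) (hy : IsSpline M y) (hyt : IsSpline M yt) :
    |L2Inner yt (Abar N P y) - H1Inner yt y|
      ≤ 5 / (18 * (N : ℝ) ^ 2) * (Real.sqrt (H2Sq yt) * Real.sqrt (H2Sq y)) := by
  have hNn : 0 < N := by rw [hN]; exact Nat.mul_pos hK hM
  have hNpos : (0 : ℝ) < N := by exact_mod_cast hNn
  have hN0 : (N : ℝ) ≠ 0 := ne_of_gt hNpos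
  set D : ℕ → ℝ := fun i => Gf N y (i + 1) - Gf N y i with hD
  set Dt : ℕ → ℝ := fun i => Gf N yt (i + 1) - Gf N yt i with hDt
  have hpG : ∀ j, Gf N y (j + N) = Gf N y j := Gf_periodic hM hK hN hy
  have hpGt : ∀ j, Gf N yt (j + N) = Gf N yt j := Gf_periodic hM hK hN hyt
  have hpD : ∀ j, D (j + N) = D j := by
    intro j
    show Gf N y (j + N + 1) - Gf N y (j + N) = Gf N y (j + 1) - Gf N y j
    rw [show j + N + 1 = (j + 1) + N by omega, hpG (j + 1), hpG j]
  have hpDt : ∀ j, Dt (j + N) = Dt j := by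
    intro j
    show Gf N yt (j + N + 1) - Gf N yt (j + N) = Gf N yt (j + 1) - Gf N yt j
    rw [show j + N + 1 = (j + 1) + N by omega, hpGt (j + 1), hpGt j]
  have hED : L2Inner yt (Abar N P y) - H1Inner yt y
      = ∑ i ∈ Finset.range N, (-(1 / (6 * (N : ℝ))) * (Dt i * D i)
          + (1 / (36 * (N : ℝ))) * ((Dt (i + 1) - Dt i) * (D (i + 1) - D i))) :=
    E_formula hM hK hN hP hy hyt
  set S00 : ℝ := ∑ i ∈ Finset.range N, Dt i * D i with hS00
  set S11 : ℝ := ∑ i ∈ Finset.range N, Dt (i + 1) * D (i + 1) with hS11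
  set S10 : ℝ := ∑ i ∈ Finset.range N, Dt (i + 1) * D i with hS10
  set S01 : ℝ := ∑ i ∈ Finset.range N, Dt i * D (i + 1) with hS01
  have hsplit : L2Inner yt (Abar N P y) - H1Inner yt y
      = -(1 / (6 * (N : ℝ))) * S00
        + (1 / (36 * (N : ℝ))) * (S11 - S10 - S01 + S00) := by
    rw [hED, Finset.sum_add_distrib]
    congr 1
    · rw [hS00, ← Finset.mul_sum]
    · rw [← Finset.mul_sum]
      congr 1
      have hexp : ∀ i ∈ Finset.range N,
          (Dt (i + 1) - Dt i) * (D (i + 1) - D i)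
            = Dt (i + 1) * D (i + 1) - Dt (i + 1) * D i - Dt i * D (i + 1)
              + Dt i * D i := fun i _ => by ring
      rw [Finset.sum_congr rfl hexp, Finset.sum_add_distrib, Finset.sum_sub_distrib,
        Finset.sum_sub_distrib]
  set R2 : ℝ := ∑ i ∈ Finset.range N, D i ^ 2 with hR2
  set Rt2 : ℝ := ∑ i ∈ Finset.range N, Dt i ^ 2 with hRt2
  have hDshift : (∑ i ∈ Finset.range N, D (i + 1) ^ 2) = R2 := by
    refine sum_shift (f := fun i => D i ^ 2) ?_
    show D N ^ 2 = D 0 ^ 2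
    have h := hpD 0
    rw [Nat.zero_add] at h
    rw [h]
  have hDtshift : (∑ i ∈ Finset.range N, Dt (i + 1) ^ 2) = Rt2 := by
    refine sum_shift (f := fun i => Dt i ^ 2) ?_
    show Dt N ^ 2 = Dt 0 ^ 2
    have h := hpDt 0
    rw [Nat.zero_add] at h
    rw [h]
  set RR : ℝ := Real.sqrt Rt2 * Real.sqrt R2 with hRRdef
  have cs00 : |S00| ≤ RR := abs_sum_mul_le _ _ _
  have cs11 : |S11| ≤ RR := by
    have := abs_sum_mul_le (Finset.range N) (fun i => Dt (i + 1)) (fun i => D (i + 1))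
    rwa [hDshift, hDtshift] at this
  have cs10 : |S10| ≤ RR := by
    have := abs_sum_mul_le (Finset.range N) (fun i => Dt (i + 1)) (fun i => D i)
    rwa [hDtshift] at this
  have cs01 : |S01| ≤ RR := by
    have := abs_sum_mul_le (Finset.range N) (fun i => Dt i) (fun i => D (i + 1))
    rwa [hDshift] at this
  have h4 : |S11 - S10 - S01 + S00| ≤ 4 * RR := by
    obtain ⟨a1, a2⟩ := abs_le.1 cs11
    obtain ⟨b1, b2⟩ := abs_le.1 cs10
    obtain ⟨c1, c2⟩ := abs_le.1 cs01
    obtain ⟨d1, d2⟩ := abs_le.1 cs00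
    rw [abs_le]
    constructor <;> linarith
  have h6pos : (0:ℝ) < 1 / (6 * (N : ℝ)) := by positivity
  have h36pos : (0:ℝ) < 1 / (36 * (N : ℝ)) := by positivity
  have habs : |L2Inner yt (Abar N P y) - H1Inner yt y|
      ≤ (1 / (6 * (N : ℝ))) * RR + (1 / (36 * (N : ℝ))) * (4 * RR) := by
    rw [hsplit]
    calc |(-(1 / (6 * (N : ℝ))) * S00)
        + (1 / (36 * (N : ℝ))) * (S11 - S10 - S01 + S00)|
        ≤ |(-(1 / (6 * (N : ℝ))) * S00)|
          + |(1 / (36 * (N : ℝ))) * (S11 - S10 - S01 + S00)| := abs_add_le _ _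
      _ ≤ (1 / (6 * (N : ℝ))) * RR + (1 / (36 * (N : ℝ))) * (4 * RR) := by
          apply add_le_add
          · rw [abs_mul, abs_neg, abs_of_pos h6pos]
            exact mul_le_mul_of_nonneg_left cs00 (le_of_lt h6pos)
          · rw [abs_mul, abs_of_pos h36pos]
            exact mul_le_mul_of_nonneg_left h4 (le_of_lt h36pos)
  have hRR : RR = Real.sqrt (H2Sq yt) * Real.sqrt (H2Sq y) / (N : ℝ) := by
    have h2 : H2Sq y = (N : ℝ) * R2 := by
      rw [H2Sq_formula hM hK hN hy, hR2, Finset.mul_sum]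
    have h2t : H2Sq yt = (N : ℝ) * Rt2 := by
      rw [H2Sq_formula hM hK hN hyt, hRt2, Finset.mul_sum]
    rw [hRRdef, h2, h2t, Real.sqrt_mul (le_of_lt hNpos), Real.sqrt_mul (le_of_lt hNpos)]
    rw [show Real.sqrt (N : ℝ) * Real.sqrt Rt2 * (Real.sqrt (N : ℝ) * Real.sqrt R2)
      = (Real.sqrt (N : ℝ) * Real.sqrt (N : ℝ)) * (Real.sqrt Rt2 * Real.sqrt R2) from by
        ring]
    rw [Real.mul_self_sqrt (le_of_lt hNpos)]
    field_simp
  calc |L2Inner yt (Abar N P y) - H1Inner yt y|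
      ≤ (1 / (6 * (N : ℝ))) * RR + (1 / (36 * (N : ℝ))) * (4 * RR) := habs
    _ = 5 / (18 * (N : ℝ) ^ 2) * (Real.sqrt (H2Sq yt) * Real.sqrt (H2Sq y)) := by
        rw [hRR]
        field_simp
        ring


lemma H1Sq_nonneg (hM : 0 < M) (hy : IsSpline M y) : 0 ≤ H1Sq y := by
  have hN : M = 1 * M := (one_mul M).symm
  rw [H1Sq_eq, H1Inner_formula hM one_pos hN hy hy]
  apply Finset.sum_nonneg
  intro m _
  have hMpos : (0 : ℝ) < M := by exact_mod_cast hM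
  have h1 : (0:ℝ) ≤ 1 / (6 * (M:ℝ)) := by positivity
  apply mul_nonneg h1
  nlinarith [sq_nonneg (Gf M y m + Gf M y (m + 1)), sq_nonneg (Gf M y m),
    sq_nonneg (Gf M y (m + 1))]

lemma H2_le_H1 (hM : 0 < M) (hy : IsSpline M y) :
    H2Sq y ≤ 16 * (M : ℝ) ^ 2 * H1Sq y := by
  have hN : M = 1 * M := (one_mul M).symm
  have hMpos : (0 : ℝ) < M := by exact_mod_cast hM
  rw [H1Sq_eq, H1Inner_formula hM one_pos hN hy hy, H2Sq_formula hM one_pos hN hy,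
    Finset.mul_sum]
  apply Finset.sum_le_sum
  intro m _
  set q : ℝ := Gf M y m
  set q' : ℝ := Gf M y (m + 1)
  have : 16 * (M:ℝ) ^ 2 * (1 / (6 * (M:ℝ)) * (2 * q * q + q * q' + q' * q + 2 * q' * q'))
      = (8 * (M:ℝ) / 3) * (2 * q ^ 2 + 2 * q * q' + 2 * q' ^ 2) := by
    field_simp; ring
  rw [this]
  nlinarith [mul_nonneg (le_of_lt hMpos) (sq_nonneg (q + q')),
    mul_nonneg (le_of_lt hMpos) (sq_nonneg q), mul_nonneg (le_of_lt hMpos) (sq_nonneg q')]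

lemma sqrtH2_le (hM : 0 < M) (hy : IsSpline M y) :
    Real.sqrt (H2Sq y) ≤ 4 * (M : ℝ) * Real.sqrt (H1Sq y) := by
  have h := Real.sqrt_le_sqrt (H2_le_H1 hM hy)
  have hMpos : (0 : ℝ) < M := by exact_mod_cast hM
  rwa [show 16 * (M:ℝ) ^ 2 * H1Sq y = (4 * (M:ℝ)) ^ 2 * H1Sq y from by ring,
    Real.sqrt_mul (sq_nonneg _), Real.sqrt_sq (by positivity)] at h

end AbarAux

/-- **Closeness of the `Ā` inner product and the `H¹` inner product** (Lemma 5.13):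
`|⟨ỹ, Āy⟩_{L²} - ⟨ỹ, y⟩_{H¹}| ≲ N⁻¹(|ỹ|_{H¹}|y|_{H²} + |ỹ|_{H²}|y|_{H¹}) ≲ (M/N)|ỹ|_{H¹}|y|_{H¹}`. -/
theorem Abar_H1_inner_close :
    ∃ (C : ℝ) (Kstar : ℕ), 0 < C ∧
      ∀ (N M K : ℕ), 0 < M → Kstar ≤ K → N = K * M →
      ∀ P : (ℝ → ℝ) → ℝ → ℝ, IsL2Projection M P →
      ∀ y yt, IsSpline M y → IsSpline M yt →
        |L2Inner yt (Abar N P y) - H1Inner yt y| ≤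
            C / N * (Real.sqrt (H1Sq yt) * Real.sqrt (H2Sq y) +
              Real.sqrt (H2Sq yt) * Real.sqrt (H1Sq y)) ∧
          |L2Inner yt (Abar N P y) - H1Inner yt y| ≤
            C * M / N * Real.sqrt (H1Sq yt) * Real.sqrt (H1Sq y) := by
  refine ⟨5, 1, by norm_num, ?_⟩
  intro N M K hM hK hNKM P hP y yt hy hyt
  have hKpos : 0 < K := hK
  have hNn : 0 < N := by rw [hNKM]; exact Nat.mul_pos hKpos hM
  have hNpos : (0 : ℝ) < N := by exact_mod_cast hNn
  have hMpos : (0 : ℝ) < M := by exact_mod_cast hM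
  have hMN : (M : ℝ) ≤ (N : ℝ) := by
    have : M ≤ N := by rw [hNKM]; exact Nat.le_mul_of_pos_left M hKpos
    exact_mod_cast this
  have hEb := AbarAux.E_bound hM hKpos hNKM hP hy hyt
  have hs2y := AbarAux.sqrtH2_le hM hy
  have hs2yt := AbarAux.sqrtH2_le hM hyt
  have h1y : (0:ℝ) ≤ Real.sqrt (H1Sq y) := Real.sqrt_nonneg _
  have h1yt : (0:ℝ) ≤ Real.sqrt (H1Sq yt) := Real.sqrt_nonneg _
  have h2y : (0:ℝ) ≤ Real.sqrt (H2Sq y) := Real.sqrt_nonneg _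
  have h2yt : (0:ℝ) ≤ Real.sqrt (H2Sq yt) := Real.sqrt_nonneg _
  constructor
  · calc |L2Inner yt (Abar N P y) - H1Inner yt y|
        ≤ 5 / (18 * (N : ℝ) ^ 2) * (Real.sqrt (H2Sq yt) * Real.sqrt (H2Sq y)) := hEb
      _ ≤ 5 / (18 * (N : ℝ) ^ 2)
          * (Real.sqrt (H2Sq yt) * (4 * (M : ℝ) * Real.sqrt (H1Sq y))) := by
          apply mul_le_mul_of_nonneg_left _ (by positivity)
          exact mul_le_mul_of_nonneg_left hs2y h2yt
      _ = (20 * (M : ℝ) / (18 * (N : ℝ) ^ 2))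
          * (Real.sqrt (H2Sq yt) * Real.sqrt (H1Sq y)) := by ring
      _ ≤ (5 / (N : ℝ)) * (Real.sqrt (H2Sq yt) * Real.sqrt (H1Sq y)) := by
          apply mul_le_mul_of_nonneg_right _ (by positivity)
          rw [div_le_div_iff₀ (by positivity) hNpos]
          nlinarith
      _ ≤ 5 / (N : ℝ) * (Real.sqrt (H1Sq yt) * Real.sqrt (H2Sq y)
          + Real.sqrt (H2Sq yt) * Real.sqrt (H1Sq y)) := by
          have hnn : (0:ℝ) ≤ 5 / (N : ℝ) * (Real.sqrt (H1Sq yt) * Real.sqrt (H2Sq y)) := by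
            positivity
          nlinarith
  · calc |L2Inner yt (Abar N P y) - H1Inner yt y|
        ≤ 5 / (18 * (N : ℝ) ^ 2) * (Real.sqrt (H2Sq yt) * Real.sqrt (H2Sq y)) := hEb
      _ ≤ 5 / (18 * (N : ℝ) ^ 2)
          * ((4 * (M : ℝ) * Real.sqrt (H1Sq yt)) * (4 * (M : ℝ) * Real.sqrt (H1Sq y))) := by
          apply mul_le_mul_of_nonneg_left _ (by positivity)
          apply mul_le_mul hs2yt hs2y h2y (by positivity)
      _ = (80 * (M : ℝ) ^ 2 / (18 * (N : ℝ) ^ 2))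
          * (Real.sqrt (H1Sq yt) * Real.sqrt (H1Sq y)) := by ring
      _ ≤ (5 * (M : ℝ) / (N : ℝ)) * (Real.sqrt (H1Sq yt) * Real.sqrt (H1Sq y)) := by
          apply mul_le_mul_of_nonneg_right _ (by positivity)
          rw [div_le_div_iff₀ (by positivity) hNpos]
          nlinarith [mul_le_mul_of_nonneg_right hMN (mul_pos hMpos hNpos).le,
            (mul_pos hMpos (mul_pos hNpos hNpos)).le]
      _ = 5 * (M : ℝ) / (N : ℝ) * Real.sqrt (H1Sq yt) * Real.sqrt (H1Sq y) := by ring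

end
end
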